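/- arXiv:2505.06956 — 6 statements merged into one kernel-verified Lean document; each statement's English description precedes it below -/
import Mathlib

section
/- For every positive integer n and all s ∈ ℂ for which both sides are defined, ∏_{j=0}^{n−1} Γ(n−2s−j) = π^{−n²/2} · 2^{n(n−1)/2 − 2ns} · Γ_n((n+1)/2 − s) · Γ_n(n/2 − s), as an identity of meromorphic functions in s. -/
/-- `z` avoids the poles of the complex Gamma function, i.e. `Γ(z)` is defined. -/
def GammaDefined (z : ℂ) : Prop := ∀ m : ℕ, z ≠ -(m : ℂ)

/-- `Γ_m(s) = π^{m(m−1)/4} ∏_{i=0}^{m−1} Γ(s − i/2)`. -/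
noncomputable def GammaN (m : ℕ) (s : ℂ) : ℂ :=
  (Real.pi : ℂ) ^ ((m : ℂ) * ((m : ℂ) - 1) / 4) *
    ∏ i ∈ Finset.range m, Complex.Gamma (s - (i : ℂ) / 2)

lemma prod_cpow_two (t : Finset ℕ) (f : ℕ → ℂ) :
    ∏ j ∈ t, (2 : ℂ) ^ (f j) = (2 : ℂ) ^ (∑ j ∈ t, f j) := by
  induction t using Finset.induction with
  | empty => simp
  | insert _ _ h ih =>
      rw [Finset.prod_insert h, Finset.sum_insert h, ih,
        Complex.cpow_add _ _ two_ne_zero]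

lemma sum_range_cast (n : ℕ) :
    (∑ j ∈ Finset.range n, (j : ℂ)) = (n : ℂ) * ((n : ℂ) - 1) / 2 := by
  induction n with
  | zero => simp
  | succ k ih => rw [Finset.sum_range_succ, ih]; push_cast; ring

/-- For every positive integer `n` and all `s ∈ ℂ` where both sides are defined,
`∏_{j=0}^{n−1} Γ(n−2s−j) = π^{−n²/2}·2^{n(n−1)/2−2ns}·Γ_n((n+1)/2−s)·Γ_n(n/2−s)`. -/
theorem stmt_2 (n : ℕ) (hn : 0 < n) (s : ℂ)
    (h1 : ∀ j ∈ Finset.range n, GammaDefined ((n : ℂ) - 2 * s - (j : ℂ)))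
    (h2 : ∀ i ∈ Finset.range n, GammaDefined (((n : ℂ) + 1) / 2 - s - (i : ℂ) / 2))
    (h3 : ∀ i ∈ Finset.range n, GammaDefined ((n : ℂ) / 2 - s - (i : ℂ) / 2)) :
    ∏ j ∈ Finset.range n, Complex.Gamma ((n : ℂ) - 2 * s - (j : ℂ))
      = (Real.pi : ℂ) ^ (-(n : ℂ) ^ 2 / 2) *
          (2 : ℂ) ^ ((n : ℂ) * ((n : ℂ) - 1) / 2 - 2 * (n : ℂ) * s) *
          GammaN n (((n : ℂ) + 1) / 2 - s) * GammaN n ((n : ℂ) / 2 - s) := by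
  have hpi : (Real.pi : ℂ) ≠ 0 := Complex.ofReal_ne_zero.mpr Real.pi_ne_zero
  have hsqrt : ((Real.sqrt Real.pi : ℝ) : ℂ) = (Real.pi : ℂ) ^ ((1 : ℂ) / 2) := by
    rw [Real.sqrt_eq_rpow, Complex.ofReal_cpow Real.pi_pos.le]
    norm_num
  -- termwise duplication formula
  have key : ∀ j : ℕ, Complex.Gamma ((n : ℂ) - 2 * s - (j : ℂ))
      = Complex.Gamma (((n : ℂ) + 1) / 2 - s - (j : ℂ) / 2)
        * Complex.Gamma ((n : ℂ) / 2 - s - (j : ℂ) / 2)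
        * ((2 : ℂ) ^ ((n : ℂ) - (j : ℂ) - 2 * s - 1)
            * (((Real.sqrt Real.pi : ℝ) : ℂ))⁻¹) := by
    intro j
    set w : ℂ := (n : ℂ) / 2 - s - (j : ℂ) / 2 with hw
    have h2w : (n : ℂ) - 2 * s - (j : ℂ) = 2 * w := by rw [hw]; ring
    have hw2 : ((n : ℂ) + 1) / 2 - s - (j : ℂ) / 2 = w + 1 / 2 := by rw [hw]; ring
    have hdup := Complex.Gamma_mul_Gamma_add_half w
    have h2ne : (2 : ℂ) ^ ((1 : ℂ) - 2 * w) ≠ 0 := by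
      intro h
      exact two_ne_zero (Complex.cpow_eq_zero_iff _ _ |>.mp h).1
    have hsqrt_ne : ((Real.sqrt Real.pi : ℝ) : ℂ) ≠ 0 :=
      Complex.ofReal_ne_zero.mpr (Real.sqrt_ne_zero'.mpr Real.pi_pos)
    have hEexp : (n : ℂ) - (j : ℂ) - 2 * s - 1 = -((1 : ℂ) - 2 * w) := by
      rw [hw]; ring
    have hdup' : Complex.Gamma (w + 1 / 2) * Complex.Gamma w
        = Complex.Gamma (2 * w) * (2 : ℂ) ^ ((1 : ℂ) - 2 * w) * ((Real.sqrt Real.pi : ℝ) : ℂ) := by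
      rw [mul_comm]; exact hdup
    rw [h2w, hw2, hEexp, Complex.cpow_neg, hdup']
    field_simp
  rw [Finset.prod_congr rfl fun j _ => key j, Finset.prod_mul_distrib,
    Finset.prod_mul_distrib, Finset.prod_mul_distrib, prod_cpow_two,
    Finset.prod_const, Finset.card_range]
  have hsum : (∑ j ∈ Finset.range n, ((n : ℂ) - (j : ℂ) - 2 * s - 1))
      = (n : ℂ) * ((n : ℂ) - 1) / 2 - 2 * (n : ℂ) * s := by
    simp only [Finset.sum_sub_distrib, Finset.sum_const, Finset.card_range,
      nsmul_eq_mul, sum_range_cast]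
    ring
  rw [hsum, hsqrt, ← Complex.cpow_neg, ← Complex.cpow_nat_mul]
  have hpieq : (Real.pi : ℂ) ^ ((n : ℂ) * -((1 : ℂ) / 2))
      = (Real.pi : ℂ) ^ (-(n : ℂ) ^ 2 / 2)
        * (Real.pi : ℂ) ^ ((n : ℂ) * ((n : ℂ) - 1) / 4)
        * (Real.pi : ℂ) ^ ((n : ℂ) * ((n : ℂ) - 1) / 4) := by
    rw [← Complex.cpow_add _ _ hpi, ← Complex.cpow_add _ _ hpi]
    congr 1
    ring
  simp only [GammaN]
  rw [hpieq]
  ring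
end

section
/- Let k be an even positive integer and let n, r be integers with 0 ≤ r ≤ n. Then, as an identity of meromorphic functions in s ∈ ℂ, (−1)^{nk/2} · 2^{2ns − n(n−1)/2} · π^{n(n+1)/4} · [ Γ_n(s) · Γ_{n−r}((n+1)/2 − 2s) ] / [ Γ_n(s + k/2) · Γ_n(n/2 − s) · Γ_{n−r}((n+1)/2 − s − k/2) ] · ∏_{j=1}^{⌊n/2⌋} Γ(n+1−2s−j)/Γ(1/2−2s+j) = ∏_{j=0}^{r−1} Γ((r+1)/2 − s − k/2 − j/2) / Γ((r+1)/2 − 2s − j/2). -/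
open Complex Finset
-- sin shift
lemma sin_shift (z : ℂ) (a : ℕ) : Complex.sin (z + a * ↑Real.pi) = (-1)^a * Complex.sin z := by
  induction a with
  | zero => simp
  | succ a ih =>
    push_cast
    rw [show z + (↑a + 1) * ↑Real.pi = (z + a * ↑Real.pi) + ↑Real.pi by ring,
      Complex.sin_add_pi, ih]
    ring

-- L2: reflection shift
lemma refl_shift (z : ℂ) (a : ℕ) :
    Complex.Gamma (z + a) * Complex.Gamma (1 - z - a)
      = (-1)^a * (Complex.Gamma z * Complex.Gamma (1 - z)) := by
  have h1 : (1 : ℂ) - z - a = 1 - (z + a) := by ring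
  rw [h1, Complex.Gamma_mul_Gamma_one_sub, Complex.Gamma_mul_Gamma_one_sub]
  have h2 : Complex.sin (↑Real.pi * (z + a)) = (-1)^a * Complex.sin (↑Real.pi * z) := by
    rw [show (↑Real.pi : ℂ) * (z + a) = ↑Real.pi * z + a * ↑Real.pi by ring, sin_shift]
  rw [h2]
  rcases Nat.even_or_odd a with h | h
  · simp [h.neg_one_pow]
  · simp [h.neg_one_pow, div_neg]

-- duplication, rearranged: Γ(2x) = Γ(x)Γ(x+1/2) * 2^(2x-1) / √π
lemma dup (x : ℂ) :
    Complex.Gamma (2 * x)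
      = Complex.Gamma x * Complex.Gamma (x + 1/2) * (2:ℂ) ^ (2*x - 1) / (↑(Real.sqrt Real.pi) : ℂ) := by
  have h2 : ((2:ℂ)) ^ (1 - 2*x) * (2:ℂ) ^ (2*x - 1) = 1 := by
    rw [← Complex.cpow_add _ _ (by norm_num)]
    norm_num
  have hpi : (↑(Real.sqrt Real.pi) : ℂ) ≠ 0 := by
    simp [Real.sqrt_eq_zero', Real.pi_pos.le, Real.pi_ne_zero]
  symm
  calc Complex.Gamma x * Complex.Gamma (x + 1/2) * (2:ℂ) ^ (2*x - 1) / (↑(Real.sqrt Real.pi) : ℂ)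
      = Complex.Gamma (2*x) * ((2:ℂ)^(1-2*x) * (2:ℂ)^(2*x-1)) *
        ((↑(Real.sqrt Real.pi):ℂ) / (↑(Real.sqrt Real.pi):ℂ)) := by
        rw [Complex.Gamma_mul_Gamma_add_half]; ring
    _ = Complex.Gamma (2*x) := by rw [h2, div_self hpi]; ring

lemma dup' (x : ℂ) : Complex.Gamma x * Complex.Gamma (x + 1/2) * (2:ℂ)^(2*x-1)
    = Complex.Gamma (2*x) * (↑(Real.sqrt Real.pi) : ℂ) := by
  have h2 : ((2:ℂ)) ^ (1 - 2*x) * (2:ℂ) ^ (2*x - 1) = 1 := by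
    rw [← Complex.cpow_add _ _ (by norm_num)]; norm_num
  linear_combination (2:ℂ)^(2*x-1) * Complex.Gamma_mul_Gamma_add_half x
    + Complex.Gamma (2*x) * (↑(Real.sqrt Real.pi) : ℂ) * h2

lemma step (a n : ℕ) (s : ℂ) :
    (-1:ℂ)^a * (2:ℂ)^(2*s - (n:ℂ)) * (↑(Real.sqrt Real.pi) : ℂ)
        * (Complex.Gamma (s - (n:ℂ)/2) * Complex.Gamma ((n:ℂ) + 1 - 2*s))
      = Complex.Gamma (s + (a:ℂ) - (n:ℂ)/2) * Complex.Gamma (((n:ℂ)+1)/2 - s)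
        * Complex.Gamma (((n:ℂ)+2)/2 - s - (a:ℂ)) := by
  have hd := dup' (((n:ℂ)+1)/2 - s)
  rw [show (((n:ℂ)+1)/2 - s) + 1/2 = ((n:ℂ)+2)/2 - s by ring,
    show 2*(((n:ℂ)+1)/2 - s) = (n:ℂ) + 1 - 2*s by ring] at hd
  have hr := refl_shift (s - (n:ℂ)/2) a
  rw [show s - (n:ℂ)/2 + (a:ℂ) = s + (a:ℂ) - (n:ℂ)/2 by ring,
    show 1 - (s - (n:ℂ)/2) - (a:ℂ) = ((n:ℂ)+2)/2 - s - (a:ℂ) by ring,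
    show 1 - (s - (n:ℂ)/2) = ((n:ℂ)+2)/2 - s by ring] at hr
  have h2 : (2:ℂ)^(2*s - (n:ℂ)) * (2:ℂ)^((n:ℂ) + 1 - 2*s - 1) = 1 := by
    rw [← Complex.cpow_add _ _ (by norm_num),
      show (2*s - (n:ℂ)) + ((n:ℂ) + 1 - 2*s - 1) = 0 by ring, Complex.cpow_zero]
  linear_combination (-((-1:ℂ)^a * (2:ℂ)^(2*s - (n:ℂ)) * Complex.Gamma (s - (n:ℂ)/2))) * hd
    + ((-1:ℂ)^a * Complex.Gamma (s - (n:ℂ)/2) * Complex.Gamma (((n:ℂ)+1)/2 - s)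
        * Complex.Gamma (((n:ℂ)+2)/2 - s)) * h2
    - Complex.Gamma (((n:ℂ)+1)/2 - s) * hr

lemma keyK (a n : ℕ) (s : ℂ) :
    (-1:ℂ)^(n*a) * (2:ℂ)^(2*(n:ℂ)*s - (n:ℂ)*((n:ℂ)-1)/2) * ((↑(Real.sqrt Real.pi) : ℂ))^n
        * (∏ i ∈ range n, Complex.Gamma (s - (i:ℂ)/2))
        * (∏ i ∈ range n, Complex.Gamma ((i:ℂ) + 1 - 2*s))
      = ∏ i ∈ range n, (Complex.Gamma (s + (a:ℂ) - (i:ℂ)/2)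
          * Complex.Gamma (((i:ℂ)+1)/2 - s) * Complex.Gamma (((i:ℂ)+2)/2 - s - (a:ℂ))) := by
  induction n with
  | zero => norm_num
  | succ n ih =>
    rw [prod_range_succ, prod_range_succ, prod_range_succ, ← ih]
    have e1 : (-1:ℂ)^((n+1)*a) = (-1:ℂ)^(n*a) * (-1:ℂ)^a := by
      rw [add_one_mul, pow_add]
    have e2 : (2:ℂ)^(2*((n:ℕ)+1:ℕ)*s - ((n:ℕ)+1:ℕ)*((((n:ℕ)+1:ℕ):ℂ)-1)/2)
        = (2:ℂ)^(2*(n:ℂ)*s - (n:ℂ)*((n:ℂ)-1)/2) * (2:ℂ)^(2*s - (n:ℂ)) := by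
      rw [← Complex.cpow_add _ _ (by norm_num)]
      congr 1
      push_cast
      ring
    have hs := step a n s
    push_cast
    push_cast at e2
    rw [e1, e2, pow_succ]
    linear_combination ((-1:ℂ)^(n*a) * (2:ℂ)^(2*(n:ℂ)*s - (n:ℂ)*((n:ℂ)-1)/2)
        * ((↑(Real.sqrt Real.pi) : ℂ))^n
        * (∏ i ∈ range n, Complex.Gamma (s - (i:ℂ)/2))
        * (∏ i ∈ range n, Complex.Gamma ((i:ℂ) + 1 - 2*s))) * hs

lemma split_evenodd (g : ℕ → ℂ) (n : ℕ) :
    ∏ i ∈ range n, g (i+2)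
      = (∏ u ∈ Icc 1 (n - n/2), g (2*u)) * ∏ j ∈ Icc 1 (n/2), g (2*j+1) := by
  induction n with
  | zero => simp
  | succ n ih =>
    rw [prod_range_succ, ih]
    rcases Nat.even_or_odd n with ⟨t, rfl⟩ | ⟨t, rfl⟩
    · have h1 : (t + t) / 2 = t := by omega
      have h2 : (t + t) - (t + t)/2 = t := by omega
      have h3 : (t + t + 1) / 2 = t := by omega
      have h4 : (t + t + 1) - (t + t + 1)/2 = t + 1 := by omega
      rw [h2, h1, h4, h3, Finset.prod_Icc_succ_top (by omega : 1 ≤ t + 1)]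
      rw [show 2*(t+1) = t + t + 2 by omega]
      ring
    · have h1 : (2*t + 1) / 2 = t := by omega
      have h2 : (2*t + 1) - (2*t + 1)/2 = t + 1 := by omega
      have h3 : (2*t + 1 + 1) / 2 = t + 1 := by omega
      have h4 : (2*t + 1 + 1) - (2*t + 1 + 1)/2 = t + 1 := by omega
      rw [h2, h1, h4, h3, Finset.prod_Icc_succ_top (by omega : 1 ≤ t + 1)]
      rw [Finset.prod_Icc_succ_top (by omega : 1 ≤ t + 1) (fun j => g (2*j+1)),
        show 2*(t+1)+1 = 2*t + 1 + 2 by omega]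
      ring

lemma split_top (g : ℕ → ℂ) (n : ℕ) :
    ∏ i ∈ range n, g (i+1)
      = (∏ u ∈ Icc 1 (n - n/2), g u) * ∏ j ∈ Icc 1 (n/2), g (n+1-j) := by
  have h1 : ∏ i ∈ range n, g (i+1) = ∏ u ∈ Ico 1 (n+1), g u := by
    rw [Finset.prod_Ico_eq_prod_range]
    simp [add_comm]
  have h2 : ∏ j ∈ Icc 1 (n/2), g (n+1-j) = ∏ u ∈ Ico (n - n/2 + 1) (n+1), g u := by
    refine Finset.prod_nbij' (fun j => n + 1 - j) (fun u => n + 1 - u) ?_ ?_ ?_ ?_ ?_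
    · intro a ha; simp only [Finset.mem_Icc, Finset.mem_Ico] at *; omega
    · intro a ha; simp only [Finset.mem_Icc, Finset.mem_Ico] at *; omega
    · intro a ha; simp only [Finset.mem_Icc] at ha; show n + 1 - (n + 1 - a) = a; omega
    · intro a ha; simp only [Finset.mem_Ico] at ha; show n + 1 - (n + 1 - a) = a; omega
    · intro a ha; rfl
  rw [h1, h2, show Finset.Icc 1 (n - n/2) = Finset.Ico 1 (n - n/2 + 1) by rfl,
    Finset.prod_Ico_consecutive _ (by omega) (by omega)]

lemma reflG (n : ℕ) (b : ℂ) :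
    ∏ i ∈ range n, Complex.Gamma (b - (i:ℂ)/2)
      = ∏ i ∈ range n, Complex.Gamma (b - ((n:ℂ)-1)/2 + (i:ℂ)/2) := by
  rw [← Finset.prod_range_reflect (fun i => Complex.Gamma (b - ((n:ℂ)-1)/2 + (i:ℂ)/2)) n]
  refine Finset.prod_congr rfl fun i hi => ?_
  simp only [Finset.mem_range] at hi
  congr 1
  have h : ((n - 1 - i : ℕ):ℂ) = (n:ℂ) - 1 - i := by
    have e : n - 1 - i = n - (1 + i) := by omega
    rw [e, Nat.cast_sub (by omega : 1 + i ≤ n)]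
    push_cast; ring
  rw [h]; ring

lemma C1 (n r : ℕ) (hr : r ≤ n) (w : ℂ) :
    (∏ i ∈ range (n - r), Complex.Gamma (((n:ℂ)+1)/2 - w - (i:ℂ)/2))
        * ∏ j ∈ range r, Complex.Gamma (((r:ℂ)+1)/2 - w - (j:ℂ)/2)
      = ∏ i ∈ range n, Complex.Gamma (((n:ℂ)+1)/2 - w - (i:ℂ)/2) := by
  rw [show Finset.range n = Finset.range ((n-r)+r) from by rw [Nat.sub_add_cancel hr],
    Finset.prod_range_add]
  congr 1
  refine Finset.prod_congr rfl fun j hj => ?_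
  congr 1
  rw [show ((n - r + j : ℕ) : ℂ) = (n:ℂ) - (r:ℂ) + (j:ℂ) from by
    push_cast [Nat.cast_sub hr]; ring]
  ring

lemma C2 (n : ℕ) (s : ℂ) :
    (∏ u ∈ Icc 1 (n - n/2), Complex.Gamma ((u:ℂ) - 2*s))
        * ∏ j ∈ Icc 1 (n/2), Complex.Gamma ((n:ℂ) + 1 - 2*s - (j:ℂ))
      = ∏ i ∈ range n, Complex.Gamma ((i:ℂ) + 1 - 2*s) := by
  have hsp := split_top (fun t => Complex.Gamma ((t:ℂ) - 2*s)) n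
  calc (∏ u ∈ Icc 1 (n - n/2), Complex.Gamma ((u:ℂ) - 2*s))
        * ∏ j ∈ Icc 1 (n/2), Complex.Gamma ((n:ℂ) + 1 - 2*s - (j:ℂ))
      = (∏ u ∈ Icc 1 (n - n/2), Complex.Gamma ((u:ℂ) - 2*s))
        * ∏ j ∈ Icc 1 (n/2), Complex.Gamma (((n + 1 - j : ℕ):ℂ) - 2*s) := by
        congr 1
        refine Finset.prod_congr rfl fun j hj => ?_
        simp only [Finset.mem_Icc] at hj
        congr 1
        rw [Nat.cast_sub (by omega : j ≤ n + 1)]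
        push_cast; ring
    _ = ∏ i ∈ range n, Complex.Gamma (((i + 1 : ℕ):ℂ) - 2*s) := hsp.symm
    _ = ∏ i ∈ range n, Complex.Gamma ((i:ℂ) + 1 - 2*s) := by
        refine Finset.prod_congr rfl fun i _ => ?_
        congr 1
        push_cast; ring

lemma C3 (n : ℕ) (s : ℂ) :
    ∏ i ∈ range n, Complex.Gamma (((n:ℂ)+1)/2 - 2*s - (i:ℂ)/2)
      = (∏ u ∈ Icc 1 (n - n/2), Complex.Gamma ((u:ℂ) - 2*s))
        * ∏ j ∈ Icc 1 (n/2), Complex.Gamma (1/2 - 2*s + (j:ℂ)) := by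
  have hsp := split_evenodd (fun t => Complex.Gamma ((t:ℂ)/2 - 2*s)) n
  calc ∏ i ∈ range n, Complex.Gamma (((n:ℂ)+1)/2 - 2*s - (i:ℂ)/2)
      = ∏ i ∈ range n, Complex.Gamma (((n - 1 - i + 2 : ℕ):ℂ)/2 - 2*s) := by
        refine Finset.prod_congr rfl fun i hi => ?_
        simp only [Finset.mem_range] at hi
        rw [show n - 1 - i + 2 = n + 1 - i from by omega,
          Nat.cast_sub (by omega : i ≤ n + 1)]
        congr 1
        push_cast; ring
    _ = ∏ i ∈ range n, Complex.Gamma (((i + 2 : ℕ):ℂ)/2 - 2*s) :=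
        Finset.prod_range_reflect (fun i => Complex.Gamma (((i + 2 : ℕ):ℂ)/2 - 2*s)) n
    _ = (∏ u ∈ Icc 1 (n - n/2), Complex.Gamma ((u:ℂ) - 2*s))
        * ∏ j ∈ Icc 1 (n/2), Complex.Gamma (1/2 - 2*s + (j:ℂ)) := by
        rw [hsp]
        congr 1
        · refine Finset.prod_congr rfl fun u _ => by congr 1; push_cast; ring
        · refine Finset.prod_congr rfl fun j _ => by congr 1; push_cast; ring

lemma C1b (n r : ℕ) (hr : r ≤ n) (c u : ℂ) :
    (∏ i ∈ range (n - r), Complex.Gamma (((n:ℂ)+1)/2 - c - u - (i:ℂ)/2))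
        * ∏ j ∈ range r, Complex.Gamma (((r:ℂ)+1)/2 - c - u - (j:ℂ)/2)
      = ∏ i ∈ range n, Complex.Gamma (((n:ℂ)+1)/2 - c - u - (i:ℂ)/2) := by
  rw [show Finset.range n = Finset.range ((n-r)+r) from by rw [Nat.sub_add_cancel hr],
    Finset.prod_range_add]
  congr 1
  refine Finset.prod_congr rfl fun j hj => ?_
  congr 1
  rw [show ((n - r + j : ℕ) : ℂ) = (n:ℂ) - (r:ℂ) + (j:ℂ) from by
    push_cast [Nat.cast_sub hr]; ring]
  ring

lemma reflR1 (n : ℕ) (c u : ℂ) :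
    ∏ i ∈ range n, Complex.Gamma (((n:ℂ)+1)/2 - c - u - (i:ℂ)/2)
      = ∏ i ∈ range n, Complex.Gamma (((i:ℂ)+2)/2 - c - u) := by
  rw [reflG n (((n:ℂ)+1)/2 - c - u)]
  exact Finset.prod_congr rfl fun i _ => by congr 1; ring

lemma reflR2 (n : ℕ) (c : ℂ) :
    ∏ i ∈ range n, Complex.Gamma ((n:ℂ)/2 - c - (i:ℂ)/2)
      = ∏ i ∈ range n, Complex.Gamma (((i:ℂ)+1)/2 - c) := by
  rw [reflG n ((n:ℂ)/2 - c)]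
  exact Finset.prod_congr rfl fun i _ => by congr 1; ring

lemma pipow (n : ℕ) :
    (Real.pi:ℂ)^((n:ℂ)*((n:ℂ)+1)/4)
      = ((Real.sqrt Real.pi : ℝ):ℂ)^n * (Real.pi:ℂ)^((n:ℂ)*((n:ℂ)-1)/4) := by
  have h1 : ((Real.sqrt Real.pi : ℝ):ℂ)^n = (Real.pi:ℂ)^((n:ℂ)/2) := by
    rw [← Complex.ofReal_pow]
    have h2 : Real.sqrt Real.pi ^ n = Real.pi ^ ((n:ℝ)/2) := by
      rw [Real.sqrt_eq_rpow, ← Real.rpow_natCast (Real.pi ^ ((1:ℝ)/2)) n,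
        ← Real.rpow_mul Real.pi_pos.le]
      rw [show (1:ℝ)/2 * (n:ℝ) = (n:ℝ)/2 by ring]
    rw [h2, Complex.ofReal_cpow Real.pi_pos.le]
    congr 1
    push_cast; ring
  rw [h1, ← Complex.cpow_add _ _ (Complex.ofReal_ne_zero.mpr Real.pi_ne_zero)]
  congr 1; ring

lemma masterM (a n r : ℕ) (hr : r ≤ n) (s : ℂ) :
    (-1:ℂ)^(n*a) * (2:ℂ)^(2*(n:ℂ)*s - (n:ℂ)*((n:ℂ)-1)/2)
        * (Real.pi:ℂ)^((n:ℂ)*((n:ℂ)+1)/4)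
        * (GammaN n s * GammaN (n-r) (((n:ℂ)+1)/2 - 2*s))
        * (∏ j ∈ Icc 1 (n/2), Complex.Gamma ((n:ℂ)+1-2*s-(j:ℂ)))
        * (∏ j ∈ range r, Complex.Gamma (((r:ℂ)+1)/2 - 2*s - (j:ℂ)/2))
      = (GammaN n (s + (a:ℂ)) * GammaN n ((n:ℂ)/2 - s)
          * GammaN (n-r) (((n:ℂ)+1)/2 - s - (a:ℂ)))
        * (∏ j ∈ Icc 1 (n/2), Complex.Gamma (1/2 - 2*s + (j:ℂ)))
        * (∏ j ∈ range r, Complex.Gamma (((r:ℂ)+1)/2 - s - (a:ℂ) - (j:ℂ)/2)) := by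
  have hC1a := C1 n r hr (2*s)
  have hC1b := C1b n r hr s (a:ℂ)
  have hC3 := C3 n s
  have hC2 := C2 n s
  have hpp := pipow n
  have hK := keyK a n s
  have hT : (∏ i ∈ range n, (Complex.Gamma (s + (a:ℂ) - (i:ℂ)/2)
          * Complex.Gamma (((i:ℂ)+1)/2 - s) * Complex.Gamma (((i:ℂ)+2)/2 - s - (a:ℂ))))
      = (∏ i ∈ range n, Complex.Gamma (s + (a:ℂ) - (i:ℂ)/2))
        * (∏ i ∈ range n, Complex.Gamma (((i:ℂ)+1)/2 - s))
        * (∏ i ∈ range n, Complex.Gamma (((i:ℂ)+2)/2 - s - (a:ℂ))) := by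
    rw [Finset.prod_mul_distrib, Finset.prod_mul_distrib]
  have hR2 := reflR2 n s
  have hR1 := reflR1 n s (a:ℂ)
  simp only [GammaN]
  linear_combination
    ((-1:ℂ)^(n*a) * (2:ℂ)^(2*(n:ℂ)*s - (n:ℂ)*((n:ℂ)-1)/2)
      * (Real.pi:ℂ)^((n:ℂ)*((n:ℂ)+1)/4) * (Real.pi:ℂ)^((n:ℂ)*((n:ℂ)-1)/4)
      * (Real.pi:ℂ)^((((n-r):ℕ):ℂ)*((((n-r):ℕ):ℂ)-1)/4)
      * (∏ i ∈ range n, Complex.Gamma (s - (i:ℂ)/2))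
      * (∏ j ∈ Icc 1 (n/2), Complex.Gamma ((n:ℂ)+1-2*s-(j:ℂ)))) * hC1a
    + ((-1:ℂ)^(n*a) * (2:ℂ)^(2*(n:ℂ)*s - (n:ℂ)*((n:ℂ)-1)/2)
      * (Real.pi:ℂ)^((n:ℂ)*((n:ℂ)+1)/4) * (Real.pi:ℂ)^((n:ℂ)*((n:ℂ)-1)/4)
      * (Real.pi:ℂ)^((((n-r):ℕ):ℂ)*((((n-r):ℕ):ℂ)-1)/4)
      * (∏ i ∈ range n, Complex.Gamma (s - (i:ℂ)/2))
      * (∏ j ∈ Icc 1 (n/2), Complex.Gamma ((n:ℂ)+1-2*s-(j:ℂ)))) * hC3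
    + ((-1:ℂ)^(n*a) * (2:ℂ)^(2*(n:ℂ)*s - (n:ℂ)*((n:ℂ)-1)/2)
      * (Real.pi:ℂ)^((n:ℂ)*((n:ℂ)+1)/4) * (Real.pi:ℂ)^((n:ℂ)*((n:ℂ)-1)/4)
      * (Real.pi:ℂ)^((((n-r):ℕ):ℂ)*((((n-r):ℕ):ℂ)-1)/4)
      * (∏ i ∈ range n, Complex.Gamma (s - (i:ℂ)/2))
      * (∏ j ∈ Icc 1 (n/2), Complex.Gamma (1/2 - 2*s + (j:ℂ)))) * hC2
    + ((-1:ℂ)^(n*a) * (2:ℂ)^(2*(n:ℂ)*s - (n:ℂ)*((n:ℂ)-1)/2)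
      * (Real.pi:ℂ)^((n:ℂ)*((n:ℂ)-1)/4)
      * (Real.pi:ℂ)^((((n-r):ℕ):ℂ)*((((n-r):ℕ):ℂ)-1)/4)
      * (∏ i ∈ range n, Complex.Gamma (s - (i:ℂ)/2))
      * (∏ j ∈ Icc 1 (n/2), Complex.Gamma (1/2 - 2*s + (j:ℂ)))
      * (∏ i ∈ range n, Complex.Gamma ((i:ℂ) + 1 - 2*s))) * hpp
    + ((Real.pi:ℂ)^((n:ℂ)*((n:ℂ)-1)/4) * (Real.pi:ℂ)^((n:ℂ)*((n:ℂ)-1)/4)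
      * (Real.pi:ℂ)^((((n-r):ℕ):ℂ)*((((n-r):ℕ):ℂ)-1)/4)
      * (∏ j ∈ Icc 1 (n/2), Complex.Gamma (1/2 - 2*s + (j:ℂ)))) * (hK + hT)
    - ((Real.pi:ℂ)^((n:ℂ)*((n:ℂ)-1)/4) * (Real.pi:ℂ)^((n:ℂ)*((n:ℂ)-1)/4)
      * (Real.pi:ℂ)^((((n-r):ℕ):ℂ)*((((n-r):ℕ):ℂ)-1)/4)
      * (∏ j ∈ Icc 1 (n/2), Complex.Gamma (1/2 - 2*s + (j:ℂ)))
      * (∏ i ∈ range n, Complex.Gamma (s + (a:ℂ) - (i:ℂ)/2))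
      * (∏ i ∈ range n, Complex.Gamma (((i:ℂ)+2)/2 - s - (a:ℂ)))) * hR2
    - ((Real.pi:ℂ)^((n:ℂ)*((n:ℂ)-1)/4) * (Real.pi:ℂ)^((n:ℂ)*((n:ℂ)-1)/4)
      * (Real.pi:ℂ)^((((n-r):ℕ):ℂ)*((((n-r):ℕ):ℂ)-1)/4)
      * (∏ j ∈ Icc 1 (n/2), Complex.Gamma (1/2 - 2*s + (j:ℂ)))
      * (∏ i ∈ range n, Complex.Gamma (s + (a:ℂ) - (i:ℂ)/2))
      * (∏ i ∈ range n, Complex.Gamma ((n:ℂ)/2 - s - (i:ℂ)/2))) * (hR1 + hC1b)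

lemma GammaN_ne_zero (m : ℕ) (x : ℂ) (h : ∀ i ∈ Finset.range m, GammaDefined (x - (i:ℂ)/2)) :
    GammaN m x ≠ 0 := by
  unfold GammaN
  refine mul_ne_zero ?_ (Finset.prod_ne_zero_iff.mpr fun i hi => Complex.Gamma_ne_zero (h i hi))
  simp [Complex.cpow_eq_zero_iff, Real.pi_ne_zero]


/-- For an even positive integer `k`, integers `0 ≤ r ≤ n` and all `s ∈ ℂ` where both
sides are defined,
`(−1)^{nk/2}·2^{2ns−n(n−1)/2}·π^{n(n+1)/4}
  · [Γ_n(s)·Γ_{n−r}((n+1)/2−2s)] / [Γ_n(s+k/2)·Γ_n(n/2−s)·Γ_{n−r}((n+1)/2−s−k/2)]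
  · ∏_{j=1}^{⌊n/2⌋} Γ(n+1−2s−j)/Γ(1/2−2s+j)
  = ∏_{j=0}^{r−1} Γ((r+1)/2−s−k/2−j/2)/Γ((r+1)/2−2s−j/2)`. -/
theorem stmt_5 (k : ℕ) (hk : 0 < k) (hke : Even k) (n r : ℕ) (hr : r ≤ n) (s : ℂ)
    (h1 : ∀ i ∈ Finset.range n, GammaDefined (s - (i : ℂ) / 2))
    (h2 : ∀ i ∈ Finset.range n, GammaDefined (((n : ℂ) + 1) / 2 - 2 * s - (i : ℂ) / 2))
    (h3 : ∀ i ∈ Finset.range n, GammaDefined (s + (k : ℂ) / 2 - (i : ℂ) / 2))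
    (h4 : ∀ i ∈ Finset.range n, GammaDefined ((n : ℂ) / 2 - s - (i : ℂ) / 2))
    (h5 : ∀ i ∈ Finset.range n,
      GammaDefined (((n : ℂ) + 1) / 2 - s - (k : ℂ) / 2 - (i : ℂ) / 2))
    (h6 : ∀ j ∈ Finset.Icc 1 (n / 2), GammaDefined ((n : ℂ) + 1 - 2 * s - (j : ℂ)))
    (h7 : ∀ j ∈ Finset.Icc 1 (n / 2), GammaDefined (1 / 2 - 2 * s + (j : ℂ)))
    (h8 : ∀ j ∈ Finset.range r,
      GammaDefined (((r : ℂ) + 1) / 2 - s - (k : ℂ) / 2 - (j : ℂ) / 2))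
    (h9 : ∀ j ∈ Finset.range r, GammaDefined (((r : ℂ) + 1) / 2 - 2 * s - (j : ℂ) / 2)) :
    (-1 : ℂ) ^ (n * k / 2) * (2 : ℂ) ^ (2 * (n : ℂ) * s - (n : ℂ) * ((n : ℂ) - 1) / 2) *
        (Real.pi : ℂ) ^ ((n : ℂ) * ((n : ℂ) + 1) / 4) *
        (GammaN n s * GammaN (n - r) (((n : ℂ) + 1) / 2 - 2 * s)) /
        (GammaN n (s + (k : ℂ) / 2) * GammaN n ((n : ℂ) / 2 - s) *
          GammaN (n - r) (((n : ℂ) + 1) / 2 - s - (k : ℂ) / 2)) *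
        ∏ j ∈ Finset.Icc 1 (n / 2),
          Complex.Gamma ((n : ℂ) + 1 - 2 * s - (j : ℂ)) /
            Complex.Gamma (1 / 2 - 2 * s + (j : ℂ))
      = ∏ j ∈ Finset.range r,
          Complex.Gamma (((r : ℂ) + 1) / 2 - s - (k : ℂ) / 2 - (j : ℂ) / 2) /
            Complex.Gamma (((r : ℂ) + 1) / 2 - 2 * s - (j : ℂ) / 2) := by
  obtain ⟨a, hae⟩ := hke
  have hk2 : (k:ℂ)/2 = (a:ℂ) := by subst hae; push_cast; ring
  have hnk : n * k / 2 = n * a := by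
    subst hae
    rw [show n * (a + a) = n * a * 2 by ring, Nat.mul_div_cancel _ (by norm_num : 0 < 2)]
  rw [hnk, hk2]
  rw [hk2] at h3 h5
  have hd1 : GammaN n (s + (a:ℂ)) ≠ 0 := GammaN_ne_zero n _ h3
  have hd2 : GammaN n ((n:ℂ)/2 - s) ≠ 0 := GammaN_ne_zero n _ h4
  have hd3 : GammaN (n-r) (((n:ℂ)+1)/2 - s - (a:ℂ)) ≠ 0 := by
    refine GammaN_ne_zero (n-r) _ fun i hi => h5 i ?_
    simp only [Finset.mem_range] at *
    omega
  have hP8 : (∏ j ∈ Finset.Icc 1 (n/2), Complex.Gamma (1/2 - 2*s + (j:ℂ))) ≠ 0 :=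
    Finset.prod_ne_zero_iff.mpr fun j hj => Complex.Gamma_ne_zero (h7 j hj)
  have hV : (∏ j ∈ Finset.range r,
      Complex.Gamma (((r:ℂ)+1)/2 - 2*s - (j:ℂ)/2)) ≠ 0 :=
    Finset.prod_ne_zero_iff.mpr fun j hj => Complex.Gamma_ne_zero (h9 j hj)
  rw [Finset.prod_div_distrib, Finset.prod_div_distrib, div_mul_div_comm,
    div_eq_div_iff (mul_ne_zero (mul_ne_zero (mul_ne_zero hd1 hd2) hd3) hP8) hV]
  linear_combination masterM a n r hr s
end

section
/- Let k be an odd positive integer and let n, r be integers with 0 ≤ r ≤ n. Then, as an identity of meromorphic functions in s ∈ ℂ, (−1)^{n(k−1)/2} · 2^{2ns − n(n−1)/2} · π^{n(n+1)/4} · [ Γ_n(s + 1/2) · Γ_{n−r}((n+1)/2 − 2s) ] / [ Γ_n(s + k/2) · Γ_n((n+1)/2 − s) · Γ_{n−r}((n+1)/2 − s − k/2) ] · ∏_{j=1}^{⌊n/2⌋} Γ(n+1−2s−j)/Γ(1/2−2s+j) = ∏_{j=0}^{r−1} Γ((r+1)/2 − s − k/2 − j/2) / Γ((r+1)/2 −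 2s − j/2). -/
open Complex Finset

lemma aux_cpow_sum {α : Type*} (t : Finset α) (x : ℂ) (hx : x ≠ 0) (f : α → ℂ) :
    ∏ i ∈ t, x ^ f i = x ^ (∑ i ∈ t, f i) := by
  induction t using Finset.cons_induction with
  | empty => simp
  | cons a t ha ih => rw [prod_cons, sum_cons, ih, Complex.cpow_add _ _ hx]

lemma aux_cpow_nat (x : ℂ) (hx : x ≠ 0) (y : ℂ) (n : ℕ) :
    (x ^ y) ^ n = x ^ (y * n) := by
  induction n with
  | zero => simp
  | succ m ih =>
    rw [pow_succ, ih, ← Complex.cpow_add _ _ hx]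
    push_cast
    ring_nf

lemma aux_cpow_ne_zero (x : ℂ) (hx : x ≠ 0) (y : ℂ) : x ^ y ≠ 0 := by
  rw [Complex.cpow_def_of_ne_zero hx]
  exact Complex.exp_ne_zero _

lemma aux_sin_shift (z : ℂ) (l : ℕ) :
    Complex.sin (z + l * ↑Real.pi) = (-1) ^ l * Complex.sin z := by
  induction l with
  | zero => simp
  | succ m ih =>
    have h : z + ((m : ℂ) + 1) * ↑Real.pi = (z + m * ↑Real.pi) + ↑Real.pi := by ring
    push_cast
    rw [h, Complex.sin_add_pi, ih]
    ring

lemma aux_refl (z : ℂ) (l : ℕ) :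
    Complex.Gamma (z + l) * Complex.Gamma (1 - z - l)
      = (-1) ^ l * (Complex.Gamma z * Complex.Gamma (1 - z)) := by
  have h1 := Complex.Gamma_mul_Gamma_one_sub (z + l)
  have h2 := Complex.Gamma_mul_Gamma_one_sub z
  rw [show (1 : ℂ) - (z + l) = 1 - z - l by ring] at h1
  rw [h1, h2, show (↑Real.pi : ℂ) * (z + l) = ↑Real.pi * z + l * ↑Real.pi by ring,
    aux_sin_shift]
  rcases Nat.even_or_odd l with h | h
  · rw [h.neg_one_pow]; simp
  · rw [h.neg_one_pow]
    rw [neg_one_mul, div_neg, neg_one_mul]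

lemma aux_pair (f : ℕ → ℂ) (m : ℕ) :
    ∏ t ∈ range (m + m), f t = ∏ j ∈ range m, (f (2 * j) * f (2 * j + 1)) := by
  induction m with
  | zero => simp
  | succ p ih =>
    have h : p + 1 + (p + 1) = (p + p) + 1 + 1 := by omega
    rw [h, prod_range_succ, prod_range_succ, ih, prod_range_succ]
    have h2 : 2 * p = p + p := by omega
    rw [h2, mul_assoc]

lemma aux_sum_range_cast (n : ℕ) :
    (∑ t ∈ range n, (t : ℂ)) * 2 = n * (n - 1) := by
  induction n with
  | zero => simp
  | succ m ih =>
    rw [sum_range_succ, add_mul, ih]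
    push_cast
    ring

lemma aux_Icc_range (f : ℕ → ℂ) (M : ℕ) :
    ∏ j ∈ Icc 1 M, f j = ∏ i ∈ range M, f (1 + i) := by
  rw [← Finset.Ico_add_one_right_eq_Icc, Finset.prod_Ico_eq_prod_range]
  norm_num

lemma aux_parity_even (G : ℕ → ℂ) (m : ℕ) :
    ∏ t ∈ range (m + m), G (t + 2)
      = (∏ j ∈ Icc 1 m, G (2 * j + 1)) * ∏ t ∈ range m, G (2 * t + 2) := by
  rw [aux_pair (fun t => G (t + 2)) m, prod_mul_distrib, aux_Icc_range, mul_comm]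
  congr 1
  apply prod_congr rfl
  intro i _
  congr 1
  omega

lemma aux_parity (G : ℕ → ℂ) (n : ℕ) :
    ∏ t ∈ range n, G (t + 2)
      = (∏ j ∈ Icc 1 (n / 2), G (2 * j + 1)) * ∏ t ∈ range ((n + 1) / 2), G (2 * t + 2) := by
  rcases Nat.even_or_odd n with ⟨m, rfl⟩ | ⟨m, rfl⟩
  · have h1 : (m + m) / 2 = m := by omega
    have h2 : (m + m + 1) / 2 = m := by omega
    rw [h1, h2, aux_parity_even]
  · have h1 : (2 * m + 1) / 2 = m := by omega
    have h2 : (2 * m + 1 + 1) / 2 = m + 1 := by omega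
    have h3 : 2 * m + 1 = (m + m) + 1 := by omega
    rw [h1, h2, h3, prod_range_succ, aux_parity_even, prod_range_succ]
    have h4 : m + m + 2 = 2 * m + 2 := by omega
    rw [h4, mul_assoc]

/-- For an odd positive integer `k`, integers `0 ≤ r ≤ n` and all `s ∈ ℂ` where both
sides are defined,
`(−1)^{n(k−1)/2}·2^{2ns−n(n−1)/2}·π^{n(n+1)/4}
  · [Γ_n(s+1/2)·Γ_{n−r}((n+1)/2−2s)] / [Γ_n(s+k/2)·Γ_n((n+1)/2−s)·Γ_{n−r}((n+1)/2−s−k/2)]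
  · ∏_{j=1}^{⌊n/2⌋} Γ(n+1−2s−j)/Γ(1/2−2s+j)
  = ∏_{j=0}^{r−1} Γ((r+1)/2−s−k/2−j/2)/Γ((r+1)/2−2s−j/2)`. -/
theorem stmt_6 (k : ℕ) (hk : 0 < k) (hko : Odd k) (n r : ℕ) (hr : r ≤ n) (s : ℂ)
    (h1 : ∀ i ∈ Finset.range n, GammaDefined (s + 1 / 2 - (i : ℂ) / 2))
    (h2 : ∀ i ∈ Finset.range n, GammaDefined (((n : ℂ) + 1) / 2 - 2 * s - (i : ℂ) / 2))
    (h3 : ∀ i ∈ Finset.range n, GammaDefined (s + (k : ℂ) / 2 - (i : ℂ) / 2))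
    (h4 : ∀ i ∈ Finset.range n, GammaDefined (((n : ℂ) + 1) / 2 - s - (i : ℂ) / 2))
    (h5 : ∀ i ∈ Finset.range n,
      GammaDefined (((n : ℂ) + 1) / 2 - s - (k : ℂ) / 2 - (i : ℂ) / 2))
    (h6 : ∀ j ∈ Finset.Icc 1 (n / 2), GammaDefined ((n : ℂ) + 1 - 2 * s - (j : ℂ)))
    (h7 : ∀ j ∈ Finset.Icc 1 (n / 2), GammaDefined (1 / 2 - 2 * s + (j : ℂ)))
    (h8 : ∀ j ∈ Finset.range r,
      GammaDefined (((r : ℂ) + 1) / 2 - s - (k : ℂ) / 2 - (j : ℂ) / 2))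
    (h9 : ∀ j ∈ Finset.range r, GammaDefined (((r : ℂ) + 1) / 2 - 2 * s - (j : ℂ) / 2)) :
    (-1 : ℂ) ^ (n * (k - 1) / 2) *
        (2 : ℂ) ^ (2 * (n : ℂ) * s - (n : ℂ) * ((n : ℂ) - 1) / 2) *
        (Real.pi : ℂ) ^ ((n : ℂ) * ((n : ℂ) + 1) / 4) *
        (GammaN n (s + 1 / 2) * GammaN (n - r) (((n : ℂ) + 1) / 2 - 2 * s)) /
        (GammaN n (s + (k : ℂ) / 2) * GammaN n (((n : ℂ) + 1) / 2 - s) *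
          GammaN (n - r) (((n : ℂ) + 1) / 2 - s - (k : ℂ) / 2)) *
        ∏ j ∈ Finset.Icc 1 (n / 2),
          Complex.Gamma ((n : ℂ) + 1 - 2 * s - (j : ℂ)) /
            Complex.Gamma (1 / 2 - 2 * s + (j : ℂ))
      = ∏ j ∈ Finset.range r,
          Complex.Gamma (((r : ℂ) + 1) / 2 - s - (k : ℂ) / 2 - (j : ℂ) / 2) /
            Complex.Gamma (((r : ℂ) + 1) / 2 - 2 * s - (j : ℂ) / 2) := by

  classical
  obtain ⟨l, hkl⟩ := hko
  have hπ : (Real.pi : ℂ) ≠ 0 := by exact_mod_cast Real.pi_ne_zero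
  have h2ne : (2 : ℂ) ≠ 0 := two_ne_zero
  have hsqne : ((Real.sqrt Real.pi : ℝ) : ℂ) ≠ 0 := by
    rw [Complex.ofReal_ne_zero, Real.sqrt_ne_zero']
    exact Real.pi_pos
  simp only [GammaN, Finset.prod_div_distrib]
  set πp1 := (Real.pi : ℂ) ^ ((n : ℂ) * ((n : ℂ) - 1) / 4) with hπp1
  set πp2 := (Real.pi : ℂ) ^ (((n - r : ℕ) : ℂ) * (((n - r : ℕ) : ℂ) - 1) / 4) with hπp2
  set Tπ := (Real.pi : ℂ) ^ ((n : ℂ) * ((n : ℂ) + 1) / 4) with hTπ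
  set Sg := (-1 : ℂ) ^ (n * (k - 1) / 2) with hSgdef
  set T2 := (2 : ℂ) ^ (2 * (n : ℂ) * s - (n : ℂ) * ((n : ℂ) - 1) / 2) with hT2
  set Q1 := ∏ i ∈ Finset.range n, Complex.Gamma (s + 1 / 2 - (i : ℂ) / 2) with hQ1
  set Q2 := ∏ i ∈ Finset.range (n - r),
    Complex.Gamma (((n : ℂ) + 1) / 2 - 2 * s - (i : ℂ) / 2) with hQ2
  set Q3 := ∏ i ∈ Finset.range n, Complex.Gamma (s + (k : ℂ) / 2 - (i : ℂ) / 2) with hQ3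
  set Q4 := ∏ i ∈ Finset.range n,
    Complex.Gamma (((n : ℂ) + 1) / 2 - s - (i : ℂ) / 2) with hQ4
  set Q5 := ∏ i ∈ Finset.range (n - r),
    Complex.Gamma (((n : ℂ) + 1) / 2 - s - (k : ℂ) / 2 - (i : ℂ) / 2) with hQ5
  set Pn := ∏ x ∈ Finset.Icc 1 (n / 2),
    Complex.Gamma ((n : ℂ) + 1 - 2 * s - (x : ℂ)) with hPn
  set Pd := ∏ x ∈ Finset.Icc 1 (n / 2),
    Complex.Gamma (1 / 2 - 2 * s + (x : ℂ)) with hPd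
  set Rn := ∏ x ∈ Finset.range r,
    Complex.Gamma (((r : ℂ) + 1) / 2 - s - (k : ℂ) / 2 - (x : ℂ) / 2) with hRn
  set Rd := ∏ x ∈ Finset.range r,
    Complex.Gamma (((r : ℂ) + 1) / 2 - 2 * s - (x : ℂ) / 2) with hRd
  set E := ∏ i ∈ Finset.range n,
    Complex.Gamma (((n : ℂ) + 1) / 2 - 2 * s - (i : ℂ) / 2) with hE
  set F := ∏ i ∈ Finset.range n,
    Complex.Gamma (((n : ℂ) + 1) / 2 - s - (k : ℂ) / 2 - (i : ℂ) / 2) with hF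
  set W := ∏ t ∈ Finset.range n, Complex.Gamma ((t : ℂ) + 1 - 2 * s) with hW
  set M := ∏ t ∈ Finset.range n, Complex.Gamma (((t : ℂ) + 1) / 2 - s) with hM
  set Sπ := ((Real.sqrt Real.pi : ℝ) : ℂ) ^ n with hSπ
  set G : ℕ → ℂ := fun t => Complex.Gamma ((t : ℂ) / 2 - 2 * s) with hG
  -- nonvanishing
  have hQ3ne : Q3 ≠ 0 := Finset.prod_ne_zero_iff.mpr fun i hi => Complex.Gamma_ne_zero (h3 i hi)
  have hQ4ne : Q4 ≠ 0 := Finset.prod_ne_zero_iff.mpr fun i hi => Complex.Gamma_ne_zero (h4 i hi)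
  have hQ5ne : Q5 ≠ 0 := Finset.prod_ne_zero_iff.mpr fun i hi =>
    Complex.Gamma_ne_zero (h5 i (by rw [Finset.mem_range] at hi ⊢; omega))
  have hPdne : Pd ≠ 0 := Finset.prod_ne_zero_iff.mpr fun i hi => Complex.Gamma_ne_zero (h7 i hi)
  have hRdne : Rd ≠ 0 := Finset.prod_ne_zero_iff.mpr fun i hi => Complex.Gamma_ne_zero (h9 i hi)
  have hπp1ne : πp1 ≠ 0 := aux_cpow_ne_zero _ hπ _
  have hπp2ne : πp2 ≠ 0 := aux_cpow_ne_zero _ hπ _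
  have hSπne : Sπ ≠ 0 := pow_ne_zero _ hsqne
  -- F1 : E = Q2 * Rd
  have hrsplit : Finset.range n = Finset.range ((n - r) + r) := by
    rw [Nat.sub_add_cancel hr]
  have hF1 : E = Q2 * Rd := by
    rw [hE, hrsplit, Finset.prod_range_add, hQ2, hRd]
    congr 1
    apply Finset.prod_congr rfl
    intro j _
    congr 1
    have e : ((n - r + j : ℕ) : ℂ) = (n : ℂ) - (r : ℂ) + (j : ℂ) := by
      push_cast [Nat.cast_sub hr]
      ring
    rw [e]
    ring
  -- F2 : F = Q5 * Rn
  have hF2 : F = Q5 * Rn := by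
    rw [hF, hrsplit, Finset.prod_range_add, hQ5, hRn]
    congr 1
    apply Finset.prod_congr rfl
    intro j _
    congr 1
    have e : ((n - r + j : ℕ) : ℂ) = (n : ℂ) - (r : ℂ) + (j : ℂ) := by
      push_cast [Nat.cast_sub hr]
      ring
    rw [e]
    ring
  -- reflection of E to G-form
  have hEG : E = ∏ t ∈ Finset.range n, G (t + 2) := by
    rw [hE, ← Finset.prod_range_reflect (fun t => G (t + 2)) n]
    apply Finset.prod_congr rfl
    intro i hi
    rw [Finset.mem_range] at hi
    have e : ((n - 1 - i + 2 : ℕ) : ℂ) = (n : ℂ) + 1 - (i : ℂ) := by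
      have h' : ((n - 1 - i + 2) + i : ℕ) = n + 1 := by omega
      have h'' : ((n - 1 - i + 2 : ℕ) : ℂ) + (i : ℂ) = (n : ℂ) + 1 := by
        exact_mod_cast congrArg (Nat.cast : ℕ → ℂ) h'
      linear_combination h''
    show Complex.Gamma (((n : ℂ) + 1) / 2 - 2 * s - (i : ℂ) / 2)
        = Complex.Gamma (((n - 1 - i + 2 : ℕ) : ℂ) / 2 - 2 * s)
    rw [e]
    congr 1
    ring
  -- Pd in G-form
  have hPdG : Pd = ∏ j ∈ Finset.Icc 1 (n / 2), G (2 * j + 1) := by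
    rw [hPd]
    apply Finset.prod_congr rfl
    intro j _
    show Complex.Gamma (1 / 2 - 2 * s + (j : ℂ))
        = Complex.Gamma (((2 * j + 1 : ℕ) : ℂ) / 2 - 2 * s)
    congr 1
    push_cast
    ring
  -- W split : W = evens * Pn
  have hPn2 : Pn = ∏ x ∈ Finset.range (n / 2),
      Complex.Gamma ((((n + 1) / 2 + x : ℕ) : ℂ) + 1 - 2 * s) := by
    rw [hPn, aux_Icc_range (fun x => Complex.Gamma ((n : ℂ) + 1 - 2 * s - (x : ℂ))) (n / 2),
      ← Finset.prod_range_reflect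
        (fun x => Complex.Gamma ((((n + 1) / 2 + x : ℕ) : ℂ) + 1 - 2 * s)) (n / 2)]
    apply Finset.prod_congr rfl
    intro i hi
    rw [Finset.mem_range] at hi
    have h' : (((n + 1) / 2 + (n / 2 - 1 - i) : ℕ) + (1 + i) : ℕ) = n := by omega
    have h'' : (((n + 1) / 2 + (n / 2 - 1 - i) : ℕ) : ℂ) + ((1 + i : ℕ) : ℂ) = (n : ℂ) := by
      exact_mod_cast congrArg (Nat.cast : ℕ → ℂ) h'
    show Complex.Gamma ((n : ℂ) + 1 - 2 * s - ((1 + i : ℕ) : ℂ))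
        = Complex.Gamma ((((n + 1) / 2 + (n / 2 - 1 - i) : ℕ) : ℂ) + 1 - 2 * s)
    congr 1
    linear_combination -h''
  have hW2 : W = (∏ t ∈ Finset.range ((n + 1) / 2), G (2 * t + 2)) * Pn := by
    have hcg : Finset.range n = Finset.range ((n + 1) / 2 + n / 2) := by
      congr 1
      omega
    rw [hW, hcg, Finset.prod_range_add, hPn2]
    congr 1
    apply Finset.prod_congr rfl
    intro t _
    show Complex.Gamma ((t : ℂ) + 1 - 2 * s)
        = Complex.Gamma (((2 * t + 2 : ℕ) : ℂ) / 2 - 2 * s)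
    congr 1
    push_cast
    ring
  -- F3 : Pn * E = Pd * W
  have hF3 : Pn * E = Pd * W := by
    rw [hEG, aux_parity G n, ← hPdG, hW2]
    ring
  -- duplication
  have hdup : ∀ t ∈ Finset.range n,
      Complex.Gamma (((t : ℂ) + 1) / 2 - s) * Complex.Gamma (((t : ℂ) + 2) / 2 - s)
        = Complex.Gamma ((t : ℂ) + 1 - 2 * s) * (2 : ℂ) ^ (2 * s - (t : ℂ))
            * ((Real.sqrt Real.pi : ℝ) : ℂ) := by
    intro t _
    have h := Complex.Gamma_mul_Gamma_add_half (((t : ℂ) + 1) / 2 - s)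
    rw [show (1 : ℂ) - 2 * (((t : ℂ) + 1) / 2 - s) = 2 * s - (t : ℂ) by ring] at h
    rw [show (2 : ℂ) * (((t : ℂ) + 1) / 2 - s) = (t : ℂ) + 1 - 2 * s by ring] at h
    rw [show ((t : ℂ) + 1) / 2 - s + 1 / 2 = ((t : ℂ) + 2) / 2 - s by ring] at h
    exact h
  have hsum : ∑ t ∈ Finset.range n, (2 * s - (t : ℂ))
      = 2 * (n : ℂ) * s - (n : ℂ) * ((n : ℂ) - 1) / 2 := by
    rw [Finset.sum_sub_distrib, Finset.sum_const, Finset.card_range, nsmul_eq_mul]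
    linear_combination (-1 / 2 : ℂ) * aux_sum_range_cast n
  have hF4 : M * (∏ t ∈ Finset.range n, Complex.Gamma (((t : ℂ) + 2) / 2 - s))
      = W * T2 * Sπ := by
    rw [hM, ← Finset.prod_mul_distrib, Finset.prod_congr rfl hdup,
      Finset.prod_mul_distrib, Finset.prod_mul_distrib, Finset.prod_const,
      Finset.card_range, aux_cpow_sum _ 2 h2ne, hsum, hW, hT2, hSπ]
  -- Q4 reflected
  have hQ4refl : Q4 = ∏ t ∈ Finset.range n, Complex.Gamma (((t : ℂ) + 2) / 2 - s) := by
    rw [hQ4, ← Finset.prod_range_reflect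
      (fun t => Complex.Gamma (((t : ℂ) + 2) / 2 - s)) n]
    apply Finset.prod_congr rfl
    intro i hi
    rw [Finset.mem_range] at hi
    have h' : ((n - 1 - i : ℕ) + (i + 1) : ℕ) = n := by omega
    have h'' : ((n - 1 - i : ℕ) : ℂ) + ((i : ℂ) + 1) = (n : ℂ) := by
      exact_mod_cast congrArg (Nat.cast : ℕ → ℂ) h'
    show Complex.Gamma (((n : ℂ) + 1) / 2 - s - (i : ℂ) / 2)
        = Complex.Gamma ((((n - 1 - i : ℕ) : ℂ) + 2) / 2 - s)
    congr 1
    linear_combination (-1 / 2 : ℂ) * h''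
  have hF4' : M * Q4 = W * T2 * Sπ := by rw [hQ4refl]; exact hF4
  -- F reflected
  have hFrefl : F = ∏ t ∈ Finset.range n,
      Complex.Gamma (((t : ℂ) + 2) / 2 - s - (k : ℂ) / 2) := by
    rw [hF, ← Finset.prod_range_reflect
      (fun t => Complex.Gamma (((t : ℂ) + 2) / 2 - s - (k : ℂ) / 2)) n]
    apply Finset.prod_congr rfl
    intro i hi
    rw [Finset.mem_range] at hi
    have h' : ((n - 1 - i : ℕ) + (i + 1) : ℕ) = n := by omega
    have h'' : ((n - 1 - i : ℕ) : ℂ) + ((i : ℂ) + 1) = (n : ℂ) := by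
      exact_mod_cast congrArg (Nat.cast : ℕ → ℂ) h'
    show Complex.Gamma (((n : ℂ) + 1) / 2 - s - (k : ℂ) / 2 - (i : ℂ) / 2)
        = Complex.Gamma ((((n - 1 - i : ℕ) : ℂ) + 2) / 2 - s - (k : ℂ) / 2)
    congr 1
    linear_combination (-1 / 2 : ℂ) * h''
  -- reflection formula
  have hk2 : (k : ℂ) = 2 * (l : ℂ) + 1 := by
    rw [hkl]
    push_cast
    ring
  have hrefl : ∀ i ∈ Finset.range n,
      Complex.Gamma (s + (k : ℂ) / 2 - (i : ℂ) / 2)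
          * Complex.Gamma (((i : ℂ) + 2) / 2 - s - (k : ℂ) / 2)
        = (-1 : ℂ) ^ l
            * (Complex.Gamma (s + 1 / 2 - (i : ℂ) / 2)
              * Complex.Gamma (((i : ℂ) + 1) / 2 - s)) := by
    intro i _
    have e1 : s + (k : ℂ) / 2 - (i : ℂ) / 2 = (s + 1 / 2 - (i : ℂ) / 2) + (l : ℂ) := by
      rw [hk2]; ring
    have e2 : ((i : ℂ) + 2) / 2 - s - (k : ℂ) / 2
        = 1 - (s + 1 / 2 - (i : ℂ) / 2) - (l : ℂ) := by
      rw [hk2]; ring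
    have e3 : ((i : ℂ) + 1) / 2 - s = 1 - (s + 1 / 2 - (i : ℂ) / 2) := by ring
    rw [e1, e2, e3, aux_refl]
  have hSgl : Sg = ((-1 : ℂ) ^ l) ^ n := by
    rw [hSgdef, ← pow_mul]
    congr 1
    rw [hkl]
    rw [show 2 * l + 1 - 1 = 2 * l from rfl, show n * (2 * l) = l * n * 2 by ring,
      Nat.mul_div_cancel _ (by norm_num)]
  have hF5 : Q3 * F = Sg * (Q1 * M) := by
    rw [hFrefl, hQ3, ← Finset.prod_mul_distrib, Finset.prod_congr rfl hrefl,
      Finset.prod_mul_distrib, Finset.prod_mul_distrib, Finset.prod_const,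
      Finset.card_range, hSgl, hQ1, hM]
  -- pi powers
  have hsq : ((Real.sqrt Real.pi : ℝ) : ℂ) = (Real.pi : ℂ) ^ ((1 : ℂ) / 2) := by
    rw [Real.sqrt_eq_rpow, Complex.ofReal_cpow Real.pi_pos.le]
    norm_num
  have hF6 : Tπ = πp1 * Sπ := by
    rw [hTπ, hπp1, hSπ, hsq, aux_cpow_nat _ hπ, ← Complex.cpow_add _ _ hπ]
    congr 1
    ring
  -- assemble
  have KEY : Sg * T2 * Tπ * Q1 * Q2 * Pn * Rd = πp1 * Q3 * Q4 * Q5 * Pd * Rn := by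
    apply mul_right_cancel₀ hSπne
    calc Sg * T2 * Tπ * Q1 * Q2 * Pn * Rd * Sπ
        = Sg * T2 * Tπ * Q1 * (Q2 * Rd) * Pn * Sπ := by ring
      _ = Sg * T2 * Tπ * Q1 * E * Pn * Sπ := by rw [← hF1]
      _ = Sg * T2 * Tπ * Q1 * (Pn * E) * Sπ := by ring
      _ = Sg * T2 * Tπ * Q1 * (Pd * W) * Sπ := by rw [hF3]
      _ = Sg * Tπ * Q1 * Pd * (W * T2 * Sπ) := by ring
      _ = Sg * Tπ * Q1 * Pd * (M * Q4) := by rw [hF4']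
      _ = Tπ * Pd * Q4 * (Sg * (Q1 * M)) := by ring
      _ = Tπ * Pd * Q4 * (Q3 * F) := by rw [← hF5]
      _ = Tπ * Pd * Q4 * (Q3 * (Q5 * Rn)) := by rw [hF2]
      _ = (πp1 * Sπ) * Pd * Q4 * (Q3 * (Q5 * Rn)) := by rw [← hF6]
      _ = πp1 * Q3 * Q4 * Q5 * Pd * Rn * Sπ := by ring
  rw [div_mul_div_comm, div_eq_div_iff (mul_ne_zero (mul_ne_zero (mul_ne_zero (mul_ne_zero hπp1ne hQ3ne)
      (mul_ne_zero hπp1ne hQ4ne)) (mul_ne_zero hπp2ne hQ5ne)) hPdne) hRdne]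
  linear_combination (πp1 * πp2) * KEY
end

section
/- Let k be a positive integer and r a nonnegative integer, and set l := #{ j ∈ ℤ : max(0, r+1−2k) ≤ j ≤ r−1 and j ≡ r+1 (mod 2) }. Then the meromorphic function s ↦ ∏_{j=0}^{r−1} Γ((r+1)/2 − s − k/2 − j/2) / Γ((r+1)/2 − 2s − j/2) has a removable singularity at s = k/2 and lim_{s → k/2} ∏_{j=0}^{r−1} Γ((r+1)/2 − s − k/2 − j/2) / Γ((r+1)/2 − 2s − j/2) = 2^l, the limit being taken over s ∈ ℂ avoiding the poles. -/
open Filter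

lemma gamma_shift (n : ℕ) (z : ℂ) (hz : ∀ i : ℕ, i < n → z + i ≠ 0) :
    Complex.Gamma (z + n) = (∏ i ∈ Finset.range n, (z + i)) * Complex.Gamma z := by
  induction n with
  | zero => simp
  | succ n ih =>
    have h1 : z + ((n : ℕ) + 1 : ℕ) = (z + n) + 1 := by push_cast; ring
    rw [h1, Complex.Gamma_add_one _ (hz n (Nat.lt_succ_self n)),
      ih (fun i hi => hz i (hi.trans (Nat.lt_succ_self n))), Finset.prod_range_succ]
    ring

open scoped Classical in
lemma key_factor (x : ℂ) :
    Tendsto (fun t : ℂ => Complex.Gamma (x - t) / Complex.Gamma (x - 2 * t))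
      (nhdsWithin 0 {t : ℂ | (∀ m : ℕ, x - t ≠ -(m : ℂ)) ∧ (∀ m : ℕ, x - 2 * t ≠ -(m : ℂ))})
      (nhds (if ∃ m : ℕ, x = -(m : ℂ) then (2 : ℂ) else 1)) := by
  by_cases h : ∃ m : ℕ, x = -(m : ℂ)
  · rw [if_pos h]
    obtain ⟨m, rfl⟩ := h
    set g : ℂ → ℂ := fun t => Complex.Gamma (1 - t) / Complex.Gamma (1 - 2 * t) *
      ((∏ i ∈ Finset.range m, ((-(m : ℂ) - 2 * t + i) / (-(m : ℂ) - t + i))) * 2) with hg_def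
    have hΓcont : ∀ c : ℂ, Tendsto (fun t : ℂ => Complex.Gamma (1 - c * t)) (nhds 0)
        (nhds 1) := by
      intro c
      have h1 : ContinuousAt Complex.Gamma 1 :=
        (Complex.differentiableAt_Gamma 1 (fun m => by
          intro hc
          have : (1 : ℝ) = -(m : ℝ) := by exact_mod_cast congrArg Complex.re hc
          nlinarith [Nat.cast_nonneg (α := ℝ) m])).continuousAt
      have h2 : Tendsto (fun t : ℂ => 1 - c * t) (nhds 0) (nhds 1) := by
        simpa using ((continuous_id.tendsto (0:ℂ)).const_mul c).const_sub (1 : ℂ)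
      simpa [Complex.Gamma_one, Function.comp_def] using h1.tendsto.comp h2
    have hne : ∀ i : ℕ, i < m → -(m : ℂ) + i ≠ 0 := by
      intro i hi hc
      have : (i : ℂ) = (m : ℂ) := by linear_combination hc
      exact absurd (Nat.cast_inj.mp this) hi.ne
    have hg : Tendsto g (nhds 0) (nhds 2) := by
      have hprod : Tendsto (fun t : ℂ => ∏ i ∈ Finset.range m,
          ((-(m : ℂ) - 2 * t + i) / (-(m : ℂ) - t + i))) (nhds 0) (nhds 1) := by
        have := tendsto_finset_prod (f := fun (i : ℕ) (t : ℂ) =>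
            (-(m : ℂ) - 2 * t + i) / (-(m : ℂ) - t + i)) (x := nhds (0:ℂ))
            (a := fun i => 1) (Finset.range m) ?_
        · simpa using this
        · intro i hi
          have hi' : -(m : ℂ) + i ≠ 0 := hne i (Finset.mem_range.mp hi)
          have hnum : Tendsto (fun t : ℂ => -(m : ℂ) - 2 * t + i) (nhds 0)
              (nhds (-(m : ℂ) + i)) := by
            simpa using (((continuous_id.tendsto (0:ℂ)).const_mul (2:ℂ)).const_sub (-(m:ℂ))).add_const (i:ℂ)
          have hden : Tendsto (fun t : ℂ => -(m : ℂ) - t + i) (nhds 0)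
              (nhds (-(m : ℂ) + i)) := by
            simpa using ((continuous_id.tendsto (0:ℂ)).const_sub (-(m:ℂ))).add_const (i:ℂ)
          simpa [div_self hi', Pi.div_def] using hnum.div hden hi'
      have h1 := ((hΓcont 1).div (hΓcont 2) one_ne_zero).mul (hprod.mul (tendsto_const_nhds (x := (2:ℂ))))
      simp only [one_mul, mul_one] at h1
      convert h1 using 2 <;> norm_num [hg_def]
    refine Tendsto.congr' ?_ (hg.mono_left nhdsWithin_le_nhds)
    filter_upwards [self_mem_nhdsWithin] with t ht
    obtain ⟨h1, h2⟩ := ht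
    have ht0 : t ≠ 0 := by
      intro hc
      exact h1 m (by rw [hc]; ring)
    -- numerator identity
    have hz1 : ∀ i : ℕ, i < m + 1 → (-(m : ℂ) - t) + i ≠ 0 := by
      intro i _ hc
      exact h1 i (by linear_combination hc)
    have hz2 : ∀ i : ℕ, i < m + 1 → (-(m : ℂ) - 2 * t) + i ≠ 0 := by
      intro i _ hc
      exact h2 i (by linear_combination hc)
    have e1 : (-(m : ℂ) - t) + ((m + 1 : ℕ) : ℂ) = 1 - t := by push_cast; ring
    have e2 : (-(m : ℂ) - 2 * t) + ((m + 1 : ℕ) : ℂ) = 1 - 2 * t := by push_cast; ring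
    have g1 := gamma_shift (m + 1) (-(m : ℂ) - t) hz1
    have g2 := gamma_shift (m + 1) (-(m : ℂ) - 2 * t) hz2
    rw [e1] at g1
    rw [e2] at g2
    have hP : ∀ i ∈ Finset.range (m + 1), (-(m : ℂ) - t + i) ≠ 0 := fun i hi =>
      hz1 i (Finset.mem_range.mp hi)
    have hQ : ∀ i ∈ Finset.range (m + 1), (-(m : ℂ) - 2 * t + i) ≠ 0 := fun i hi =>
      hz2 i (Finset.mem_range.mp hi)
    have hPne : (∏ i ∈ Finset.range (m + 1), (-(m : ℂ) - t + i)) ≠ 0 :=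
      Finset.prod_ne_zero_iff.mpr hP
    have hQne : (∏ i ∈ Finset.range (m + 1), (-(m : ℂ) - 2 * t + i)) ≠ 0 :=
      Finset.prod_ne_zero_iff.mpr hQ
    have hΓnum : Complex.Gamma (-(m : ℂ) - t) =
        Complex.Gamma (1 - t) / ∏ i ∈ Finset.range (m + 1), (-(m : ℂ) - t + i) := by
      rw [g1]; field_simp
    have hΓden : Complex.Gamma (-(m : ℂ) - 2 * t) =
        Complex.Gamma (1 - 2 * t) / ∏ i ∈ Finset.range (m + 1), (-(m : ℂ) - 2 * t + i) := by
      rw [g2]; field_simp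
    have hPsplit : (∏ i ∈ Finset.range (m + 1), (-(m : ℂ) - t + i)) =
        (∏ i ∈ Finset.range m, (-(m : ℂ) - t + i)) * (-t) := by
      rw [Finset.prod_range_succ]; ring_nf
    have hQsplit : (∏ i ∈ Finset.range (m + 1), (-(m : ℂ) - 2 * t + i)) =
        (∏ i ∈ Finset.range m, (-(m : ℂ) - 2 * t + i)) * (-(2 * t)) := by
      rw [Finset.prod_range_succ]; ring_nf
    have hPmne : (∏ i ∈ Finset.range m, (-(m : ℂ) - t + i)) ≠ 0 :=
      Finset.prod_ne_zero_iff.mpr fun i hi =>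
        hz1 i ((Finset.mem_range.mp hi).trans (Nat.lt_succ_self m))
    have hΓdne : Complex.Gamma (1 - 2 * t) ≠ 0 := by
      apply Complex.Gamma_ne_zero
      intro n hc
      exact h2 (n + m + 1) (by push_cast; linear_combination hc)
    show Complex.Gamma (1 - t) / Complex.Gamma (1 - 2 * t) *
        ((∏ i ∈ Finset.range m, ((-(m : ℂ) - 2 * t + i) / (-(m : ℂ) - t + i))) * 2) =
        Complex.Gamma (-(m : ℂ) - t) / Complex.Gamma (-(m : ℂ) - 2 * t)
    rw [hΓnum, hΓden, hPsplit, hQsplit, Finset.prod_div_distrib]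
    field_simp
  · rw [if_neg h]
    push_neg at h
    have hΓ : ContinuousAt Complex.Gamma x := (Complex.differentiableAt_Gamma x h).continuousAt
    have hx : Complex.Gamma x ≠ 0 := Complex.Gamma_ne_zero h
    have hnum : Tendsto (fun t : ℂ => Complex.Gamma (x - t)) (nhds 0) (nhds (Complex.Gamma x)) := by
      have h2 : Tendsto (fun t : ℂ => x - t) (nhds 0) (nhds x) := by
        simpa using (continuous_id.tendsto (0:ℂ)).const_sub x
      exact hΓ.tendsto.comp h2
    have hden : Tendsto (fun t : ℂ => Complex.Gamma (x - 2 * t)) (nhds 0)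
        (nhds (Complex.Gamma x)) := by
      have h2 : Tendsto (fun t : ℂ => x - 2 * t) (nhds 0) (nhds x) := by
        simpa using ((continuous_id.tendsto (0:ℂ)).const_mul (2:ℂ)).const_sub x
      exact hΓ.tendsto.comp h2
    have := hnum.div hden hx
    rw [div_self hx] at this
    exact this.mono_left nhdsWithin_le_nhds

/-- Let `k ≥ 1`, `r ≥ 0` and `l := #{ j : max(0, r+1−2k) ≤ j ≤ r−1, j ≡ r+1 (mod 2) }`.
Then `s ↦ ∏_{j=0}^{r−1} Γ((r+1)/2 − s − k/2 − j/2) / Γ((r+1)/2 − 2s − j/2)` tends to `2^l`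
as `s → k/2` over those `s` avoiding the poles (so in particular the singularity at
`s = k/2` is removable). Note that for natural numbers `r+1-2*k = max(0, r+1-2k)`. -/
theorem stmt_7 (k r : ℕ) (hk : 0 < k) :
    Tendsto
      (fun s : ℂ => ∏ j ∈ Finset.range r,
        Complex.Gamma (((r : ℂ) + 1) / 2 - s - (k : ℂ) / 2 - (j : ℂ) / 2) /
          Complex.Gamma (((r : ℂ) + 1) / 2 - 2 * s - (j : ℂ) / 2))
      (nhdsWithin ((k : ℂ) / 2)
        {s : ℂ | ∀ j ∈ Finset.range r,
          GammaDefined (((r : ℂ) + 1) / 2 - s - (k : ℂ) / 2 - (j : ℂ) / 2) ∧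
          GammaDefined (((r : ℂ) + 1) / 2 - 2 * s - (j : ℂ) / 2)})
      (nhds ((2 : ℂ) ^
        (((Finset.Icc (r + 1 - 2 * k) (r - 1)).filter fun j => j % 2 = (r + 1) % 2).card)) ) := by
  classical
  set x : ℕ → ℂ := fun j => ((r : ℂ) + 1) / 2 - (k : ℂ) - (j : ℂ) / 2 with hx
  have hfac : ∀ j ∈ Finset.range r,
      Tendsto (fun s : ℂ =>
        Complex.Gamma (((r : ℂ) + 1) / 2 - s - (k : ℂ) / 2 - (j : ℂ) / 2) /
          Complex.Gamma (((r : ℂ) + 1) / 2 - 2 * s - (j : ℂ) / 2))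
        (nhdsWithin ((k : ℂ) / 2)
          {s : ℂ | ∀ j ∈ Finset.range r,
            GammaDefined (((r : ℂ) + 1) / 2 - s - (k : ℂ) / 2 - (j : ℂ) / 2) ∧
            GammaDefined (((r : ℂ) + 1) / 2 - 2 * s - (j : ℂ) / 2)})
        (nhds (if ∃ m : ℕ, x j = -(m : ℂ) then (2 : ℂ) else 1)) := by
    intro j hj
    have hmap : Tendsto (fun s : ℂ => s - (k : ℂ) / 2)
        (nhdsWithin ((k : ℂ) / 2)
          {s : ℂ | ∀ j ∈ Finset.range r,
            GammaDefined (((r : ℂ) + 1) / 2 - s - (k : ℂ) / 2 - (j : ℂ) / 2) ∧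
            GammaDefined (((r : ℂ) + 1) / 2 - 2 * s - (j : ℂ) / 2)})
        (nhdsWithin 0 {t : ℂ | (∀ m : ℕ, x j - t ≠ -(m : ℂ)) ∧
          (∀ m : ℕ, x j - 2 * t ≠ -(m : ℂ))}) := by
      rw [tendsto_nhdsWithin_iff]
      constructor
      · have hc : Tendsto (fun s : ℂ => s - (k : ℂ) / 2) (nhds ((k : ℂ) / 2)) (nhds 0) := by
          simpa using (continuous_id.tendsto ((k : ℂ) / 2)).sub_const ((k : ℂ) / 2)
        exact hc.mono_left nhdsWithin_le_nhds
      · filter_upwards [self_mem_nhdsWithin] with s hs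
        obtain ⟨hA, hB⟩ := hs j hj
        constructor
        · intro m hm
          exact hA m (by rw [hx] at hm; linear_combination hm)
        · intro m hm
          exact hB m (by rw [hx] at hm; linear_combination hm)
    have hcomp := (key_factor (x j)).comp hmap
    refine hcomp.congr fun s => ?_
    simp only [Function.comp]
    congr 2 <;> (rw [hx]; ring)
  have hT := tendsto_finset_prod (Finset.range r) hfac
  have hsetsEq : (Finset.range r).filter (fun j => ∃ m : ℕ, x j = -(m : ℂ)) =
      (Finset.Icc (r + 1 - 2 * k) (r - 1)).filter (fun j => j % 2 = (r + 1) % 2) := by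
    ext j
    simp only [Finset.mem_filter, Finset.mem_range, Finset.mem_Icc, hx]
    have hiff : (∃ m : ℕ, ((r : ℂ) + 1) / 2 - (k : ℂ) - (j : ℂ) / 2 = -(m : ℂ)) ↔
        ∃ m : ℕ, (r : ℤ) + 1 - 2 * k - j = -2 * m := by
      constructor
      · rintro ⟨m, hm⟩
        refine ⟨m, ?_⟩
        have h2 : (((r : ℤ) + 1 - 2 * k - (j : ℤ) : ℤ) : ℂ) = ((-2 * (m : ℤ) : ℤ) : ℂ) := by
          push_cast
          linear_combination 2 * hm
        exact_mod_cast h2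
      · rintro ⟨m, hm⟩
        refine ⟨m, ?_⟩
        have h2 : (((r : ℤ) + 1 - 2 * k - (j : ℤ) : ℤ) : ℂ) = ((-2 * (m : ℤ) : ℤ) : ℂ) := by
          exact_mod_cast congrArg (fun n : ℤ => (n : ℂ)) hm
        push_cast at h2
        linear_combination h2 / 2
    rw [hiff]
    constructor
    · rintro ⟨hjr, m, hm⟩
      omega
    · rintro ⟨⟨h1, h2⟩, h3⟩
      refine ⟨by omega, (2 * k + j - (r + 1)) / 2, by push_cast; omega⟩
  have hcount : (∏ j ∈ Finset.range r, if ∃ m : ℕ, x j = -(m : ℂ) then (2 : ℂ) else 1) =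
      (2 : ℂ) ^ (((Finset.Icc (r + 1 - 2 * k) (r - 1)).filter
        fun j => j % 2 = (r + 1) % 2).card) := by
    rw [Finset.prod_ite, Finset.prod_const, Finset.prod_const, one_pow, mul_one, hsetsEq]
  rw [← hcount]
  exact hT
end

section
/- Let k be a positive integer and r an integer with 0 ≤ r ≤ 2k−1. Then lim_{s → k/2} ∏_{j=0}^{r−1} Γ((r+1)/2 − s − k/2 − j/2) / Γ((r+1)/2 − 2s − j/2) equals 2^{r/2} if r is even and 2^{(r+1)/2} if r is odd, the limit being taken over s ∈ ℂ avoiding the poles. -/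
open Filter Complex

lemma Gamma_one_sub_ne (z : ℂ) (hz : Complex.sin (↑Real.pi * z) ≠ 0) :
    Complex.Gamma (1 - z) ≠ 0 := by
  intro h
  have hπ : (Real.pi : ℂ) ≠ 0 := Complex.ofReal_ne_zero.mpr Real.pi_ne_zero
  have h1 := Complex.Gamma_mul_Gamma_one_sub z
  rw [h, mul_zero] at h1
  exact (div_ne_zero hπ hz) h1.symm

lemma gamma_ratio (z w : ℂ) (hz : Complex.sin (↑Real.pi * z) ≠ 0)
    (hw : Complex.sin (↑Real.pi * w) ≠ 0) :
    Complex.Gamma z / Complex.Gamma w =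
      (Complex.sin (↑Real.pi * w) * Complex.Gamma (1 - w)) /
        (Complex.sin (↑Real.pi * z) * Complex.Gamma (1 - z)) := by
  have hπ : (Real.pi : ℂ) ≠ 0 := Complex.ofReal_ne_zero.mpr Real.pi_ne_zero
  have hGz1 := Gamma_one_sub_ne z hz
  have hGw1 := Gamma_one_sub_ne w hw
  have h1 := Complex.Gamma_mul_Gamma_one_sub z
  have h2 := Complex.Gamma_mul_Gamma_one_sub w
  rw [eq_div_iff hz] at h1
  rw [eq_div_iff hw] at h2
  have hΓw : Complex.Gamma w ≠ 0 := by
    intro h; rw [h] at h2; simp at h2; exact hπ h2.symm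
  rw [div_eq_div_iff hΓw (mul_ne_zero hz hGz1)]
  linear_combination h1 - h2

lemma sinPiNe (d : ℤ) (t : ℂ) (ht : ‖t‖ < 1/2) (ht0 : Even d → t ≠ 0) :
    Complex.sin (↑Real.pi * ((d : ℂ)/2 - t)) ≠ 0 := by
  intro h
  rw [Complex.sin_eq_zero_iff] at h
  obtain ⟨n, hn⟩ := h
  have hπ : (Real.pi : ℂ) ≠ 0 := Complex.ofReal_ne_zero.mpr Real.pi_ne_zero
  have h2 : (d : ℂ)/2 - t = n := mul_left_cancel₀ hπ (by rw [hn]; ring)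
  have ht' : t = ((d - 2*n : ℤ) : ℂ)/2 := by push_cast; linear_combination -h2
  have hnorm : ‖t‖ = |((d - 2*n : ℤ) : ℝ)| / 2 := by
    rw [ht', show ((d - 2*n : ℤ) : ℂ) = (((d - 2*n : ℤ) : ℝ) : ℂ) by push_cast; ring,
      norm_div, Complex.norm_real, Real.norm_eq_abs]
    norm_num
  by_cases h0 : d - 2*n = 0
  · exact ht0 ⟨n, by omega⟩ (by rw [ht', h0]; simp)
  · by_cases hpar : Even d
    · obtain ⟨e, he⟩ := hpar
      have h2le : (2:ℤ) ≤ |d - 2*n| := by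
        rcases abs_cases (d - 2*n) with ⟨h,_⟩|⟨h,_⟩ <;> omega
      have : (2:ℝ) ≤ |((d - 2*n : ℤ) : ℝ)| := by
        rw [← Int.cast_abs]; exact_mod_cast h2le
      rw [hnorm] at ht; linarith
    · have h1le : (1:ℤ) ≤ |d - 2*n| := Int.one_le_abs h0
      have : (1:ℝ) ≤ |((d - 2*n : ℤ) : ℝ)| := by
        rw [← Int.cast_abs]; exact_mod_cast h1le
      rw [hnorm] at ht; linarith

lemma key (d : ℤ) (hd : d ≤ 0) :
    Tendsto (fun t : ℂ => Complex.Gamma ((d:ℂ)/2 - t) / Complex.Gamma ((d:ℂ)/2 - 2*t))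
      (nhdsWithin 0 {0}ᶜ) (nhds (if Even d then 2 else 1)) := by
  have hball : ∀ᶠ t : ℂ in nhdsWithin 0 {0}ᶜ, ‖t‖ < 1/4 ∧ t ≠ 0 := by
    filter_upwards [nhdsWithin_le_nhds (Metric.ball_mem_nhds 0 (by norm_num : (0:ℝ) < 1/4)),
      self_mem_nhdsWithin] with t h1 h2
    exact ⟨by simpa [Metric.mem_ball, dist_zero_right] using h1, h2⟩
  by_cases hpar : Even d
  · -- pole case
    obtain ⟨e, he⟩ := hpar
    set m : ℕ := (-e).toNat with hm
    have hd2 : d = -(2 * (m:ℤ)) := by omega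
    have hc : (d:ℂ)/2 = -(m:ℂ) := by rw [hd2]; push_cast; ring
    rw [if_pos ⟨e, he⟩]
    have hΓd : ∀ n : ℕ, (1:ℂ) + m ≠ -(n:ℂ) := by
      intro n h
      have : ((1 + m + n : ℕ) : ℂ) = 0 := by push_cast; linear_combination h
      rw [Nat.cast_eq_zero] at this
      omega
    have hG0 : Complex.Gamma (1 + m) ≠ 0 := Complex.Gamma_ne_zero hΓd
    have t1 : Tendsto (fun t : ℂ => Complex.Gamma (1 - ((d:ℂ)/2 - 2*t))) (nhds 0)
        (nhds (Complex.Gamma (1 + m))) := by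
      refine ((Complex.differentiableAt_Gamma _ hΓd).continuousAt.tendsto).comp ?_
      refine Continuous.tendsto'
        (by continuity : Continuous (fun t : ℂ => 1 - ((d:ℂ)/2 - 2*t))) 0 (1 + m) ?_
      rw [hc]; ring
    have t2 : Tendsto (fun t : ℂ => Complex.Gamma (1 - ((d:ℂ)/2 - t))) (nhds 0)
        (nhds (Complex.Gamma (1 + m))) := by
      refine ((Complex.differentiableAt_Gamma _ hΓd).continuousAt.tendsto).comp ?_
      refine Continuous.tendsto'
        (by continuity : Continuous (fun t : ℂ => 1 - ((d:ℂ)/2 - t))) 0 (1 + m) ?_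
      rw [hc]; ring
    have t3 : Tendsto (fun t : ℂ => Complex.cos (↑Real.pi * t)) (nhds 0) (nhds 1) :=
      Continuous.tendsto' (by fun_prop) 0 1 (by simp)
    have hcont : Tendsto (fun t : ℂ => 2 * Complex.cos (↑Real.pi * t) *
        (Complex.Gamma (1 - ((d:ℂ)/2 - 2*t)) / Complex.Gamma (1 - ((d:ℂ)/2 - t))))
        (nhds 0) (nhds 2) := by
      have := ((tendsto_const_nhds : Tendsto (fun _ : ℂ => (2:ℂ)) (nhds 0) (nhds 2)).mul t3).mul
        (t1.div t2 hG0)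
      simpa [div_self hG0] using this
    refine Tendsto.congr' ?_ (hcont.mono_left nhdsWithin_le_nhds)
    filter_upwards [hball] with t ht
    obtain ⟨ht, ht0⟩ := ht
    have hsA : Complex.sin (↑Real.pi * ((d:ℂ)/2 - t)) ≠ 0 :=
      sinPiNe d t (by linarith) (fun _ => ht0)
    have hsB : Complex.sin (↑Real.pi * ((d:ℂ)/2 - 2*t)) ≠ 0 := by
      refine sinPiNe d (2*t) ?_ (fun _ => by simpa using ht0)
      rw [norm_mul]; simp only [Complex.norm_ofNat]; linarith
    have hst : Complex.sin (↑Real.pi * t) ≠ 0 := by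
      have hnt : ‖-t‖ < 1/2 := by rw [norm_neg]; linarith
      have := sinPiNe 0 (-t) hnt (fun _ => neg_ne_zero.mpr ht0)
      simpa using this
    rw [gamma_ratio _ _ hsA hsB]
    have hsinA : Complex.sin (↑Real.pi * ((d:ℂ)/2 - t)) =
        -((-1)^m * Complex.sin (↑Real.pi * t)) := by
      rw [show (↑Real.pi:ℂ) * ((d:ℂ)/2 - t) = -(↑Real.pi * t) - m * ↑Real.pi by rw [hc]; ring,
        Complex.sin_antiperiodic.sub_nat_mul_eq, Complex.sin_neg]
      simp
    have hsinB : Complex.sin (↑Real.pi * ((d:ℂ)/2 - 2*t)) =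
        -((-1)^m * (2 * Complex.sin (↑Real.pi * t) * Complex.cos (↑Real.pi * t))) := by
      rw [show (↑Real.pi:ℂ) * ((d:ℂ)/2 - 2*t) = -(2*(↑Real.pi * t)) - m * ↑Real.pi by rw [hc]; ring,
        Complex.sin_antiperiodic.sub_nat_mul_eq, Complex.sin_neg, Complex.sin_two_mul]
      simp
    have hG1 : Complex.Gamma (1 - ((d:ℂ)/2 - t)) ≠ 0 := Gamma_one_sub_ne _ hsA
    rw [hsinA, hsinB]
    have hm1 : ((-1:ℂ))^m ≠ 0 := pow_ne_zero _ (by norm_num)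
    have hne : -((-1:ℂ)^m * Complex.sin (↑Real.pi * t)) ≠ 0 := by
      simp only [neg_ne_zero]
      exact mul_ne_zero hm1 hst
    rw [show -((-1:ℂ)^m * (2 * Complex.sin (↑Real.pi*t) * Complex.cos (↑Real.pi*t))) *
          Complex.Gamma (1 - ((d:ℂ)/2 - 2*t)) =
        (-((-1:ℂ)^m * Complex.sin (↑Real.pi*t))) *
          (2 * Complex.cos (↑Real.pi*t) * Complex.Gamma (1 - ((d:ℂ)/2 - 2*t))) by ring,
      mul_div_mul_left _ _ hne, mul_div_assoc]
  · -- no-pole case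
    rw [if_neg hpar]
    have hsc : Complex.sin (↑Real.pi * ((d:ℂ)/2)) ≠ 0 := by
      have := sinPiNe d 0 (by norm_num) (fun h => absurd h hpar)
      simpa using this
    have hG1c : Complex.Gamma (1 - (d:ℂ)/2) ≠ 0 := Gamma_one_sub_ne _ hsc
    have hΓdef : ∀ n : ℕ, (1:ℂ) - (d:ℂ)/2 ≠ -(n:ℂ) := by
      intro n h
      refine hpar ?_
      have : (d:ℂ) = ((2 + 2*(n:ℤ) : ℤ) : ℂ) := by push_cast; linear_combination -2*h
      have : d = 2 + 2*(n:ℤ) := by exact_mod_cast this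
      exact ⟨1 + n, by omega⟩
    have t1 : Tendsto (fun t : ℂ => Complex.sin (↑Real.pi * ((d:ℂ)/2 - 2*t)) *
        Complex.Gamma (1 - ((d:ℂ)/2 - 2*t))) (nhds 0)
        (nhds (Complex.sin (↑Real.pi * ((d:ℂ)/2)) * Complex.Gamma (1 - (d:ℂ)/2))) := by
      refine Tendsto.mul ?_ ?_
      · refine Continuous.tendsto' (by fun_prop) 0 _ (by norm_num)
      · refine ((Complex.differentiableAt_Gamma _ hΓdef).continuousAt.tendsto).comp ?_
        refine Continuous.tendsto' (by fun_prop) 0 _ (by norm_num)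
    have t2 : Tendsto (fun t : ℂ => Complex.sin (↑Real.pi * ((d:ℂ)/2 - t)) *
        Complex.Gamma (1 - ((d:ℂ)/2 - t))) (nhds 0)
        (nhds (Complex.sin (↑Real.pi * ((d:ℂ)/2)) * Complex.Gamma (1 - (d:ℂ)/2))) := by
      refine Tendsto.mul ?_ ?_
      · refine Continuous.tendsto' (by fun_prop) 0 _ (by norm_num)
      · refine ((Complex.differentiableAt_Gamma _ hΓdef).continuousAt.tendsto).comp ?_
        refine Continuous.tendsto' (by fun_prop) 0 _ (by norm_num)
    have hcont := t1.div t2 (mul_ne_zero hsc hG1c)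
    rw [div_self (mul_ne_zero hsc hG1c)] at hcont
    refine Tendsto.congr' ?_ (hcont.mono_left nhdsWithin_le_nhds)
    filter_upwards [hball] with t ht
    obtain ⟨ht, _⟩ := ht
    have hsA : Complex.sin (↑Real.pi * ((d:ℂ)/2 - t)) ≠ 0 :=
      sinPiNe d t (by linarith) (fun h => absurd h hpar)
    have hsB : Complex.sin (↑Real.pi * ((d:ℂ)/2 - 2*t)) ≠ 0 := by
      refine sinPiNe d (2*t) ?_ (fun h => absurd h hpar)
      rw [norm_mul]; simp only [Complex.norm_ofNat]; linarith
    rw [gamma_ratio _ _ hsA hsB]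
    rfl

lemma lemE (n : ℕ) : ∏ j ∈ Finset.range n, (if Even j then (1:ℂ) else 2) = 2^(n/2) := by
  induction n with
  | zero => simp
  | succ n ih =>
    rw [Finset.prod_range_succ, ih]
    by_cases h : Even n
    · rw [if_pos h, mul_one]
      congr 1
      obtain ⟨e, he⟩ := h
      omega
    · rw [if_neg h, ← pow_succ]
      congr 1
      rw [Nat.even_iff] at h
      omega

lemma lemF (n : ℕ) : ∏ j ∈ Finset.range n, (if Even j then (2:ℂ) else 1) = 2^((n+1)/2) := by
  induction n with
  | zero => simp
  | succ n ih =>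
    rw [Finset.prod_range_succ, ih]
    by_cases h : Even n
    · rw [if_pos h, ← pow_succ]
      congr 1
      obtain ⟨e, he⟩ := h
      omega
    · rw [if_neg h, mul_one]
      congr 1
      rw [Nat.even_iff] at h
      omega

/-- Let `k ≥ 1` and `0 ≤ r ≤ 2k−1`. Then
`s ↦ ∏_{j=0}^{r−1} Γ((r+1)/2 − s − k/2 − j/2) / Γ((r+1)/2 − 2s − j/2)` tends, as `s → k/2`
over those `s` avoiding the poles, to `2^{r/2}` if `r` is even and to `2^{(r+1)/2}` if `r`
is odd. -/
theorem stmt_8 (k r : ℕ) (hk : 0 < k) (hr : r ≤ 2 * k - 1) :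
    Tendsto
      (fun s : ℂ => ∏ j ∈ Finset.range r,
        Complex.Gamma (((r : ℂ) + 1) / 2 - s - (k : ℂ) / 2 - (j : ℂ) / 2) /
          Complex.Gamma (((r : ℂ) + 1) / 2 - 2 * s - (j : ℂ) / 2))
      (nhdsWithin ((k : ℂ) / 2)
        {s : ℂ | ∀ j ∈ Finset.range r,
          GammaDefined (((r : ℂ) + 1) / 2 - s - (k : ℂ) / 2 - (j : ℂ) / 2) ∧
          GammaDefined (((r : ℂ) + 1) / 2 - 2 * s - (j : ℂ) / 2)})
      (nhds (if Even r then (2 : ℂ) ^ (r / 2) else (2 : ℂ) ^ ((r + 1) / 2))) := by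
  have hrk : r + 1 ≤ 2 * k := by omega
  rcases Nat.eq_zero_or_pos r with hr0 | hrpos
  · subst hr0
    simpa using (tendsto_const_nhds :
      Tendsto (fun _ : ℂ => (1:ℂ)) _ (nhds 1))
  · set S : Set ℂ := {s : ℂ | ∀ j ∈ Finset.range r,
      GammaDefined (((r : ℂ) + 1) / 2 - s - (k : ℂ) / 2 - (j : ℂ) / 2) ∧
      GammaDefined (((r : ℂ) + 1) / 2 - 2 * s - (j : ℂ) / 2)} with hS
    have hmap : Tendsto (fun s : ℂ => s - (k:ℂ)/2) (nhdsWithin ((k:ℂ)/2) S)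
        (nhdsWithin 0 {0}ᶜ) := by
      rw [tendsto_nhdsWithin_iff]
      constructor
      · refine Tendsto.mono_left ?_ nhdsWithin_le_nhds
        exact Continuous.tendsto' (by continuity) _ 0 (by ring)
      · filter_upwards [self_mem_nhdsWithin] with s hs
        set j0 : ℕ := if Even r then 1 else 0 with hj0def
        have hj0 : j0 ∈ Finset.range r := by
          rw [Finset.mem_range, hj0def]
          rcases Nat.even_or_odd r with h | h
          · rw [if_pos h]
            rw [Nat.even_iff] at h
            omega
          · rw [if_neg (Nat.not_even_iff_odd.mpr h)]
            omega
        obtain ⟨h1, -⟩ := hs j0 hj0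
        have hj0par : (r + 1 - j0) % 2 = 0 := by
          rcases Nat.even_or_odd r with h | h
          · rw [hj0def, if_pos h]
            rw [Nat.even_iff] at h
            omega
          · rw [hj0def, if_neg (Nat.not_even_iff_odd.mpr h)]
            rw [Nat.odd_iff] at h
            omega
        set q : ℕ := (r + 1 - j0) / 2 with hq
        have hqk : q ≤ k := by omega
        have hj0r : j0 ≤ r := by rw [Finset.mem_range] at hj0; omega
        intro h0
        have hs0 : s = (k:ℂ)/2 := by
          have : s - (k:ℂ)/2 = 0 := by simpa using h0
          linear_combination this
        refine h1 (k - q) ?_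
        rw [hs0]
        have e1 : ((k - q : ℕ) : ℂ) = (k : ℂ) - q := by
          push_cast [Nat.cast_sub hqk]; ring
        have e2 : ((q : ℕ) : ℂ) * 2 = (r : ℂ) + 1 - j0 := by
          have : (q * 2 : ℕ) = r + 1 - j0 := by omega
          calc ((q : ℕ) : ℂ) * 2 = ((q * 2 : ℕ) : ℂ) := by push_cast; ring
          _ = ((r + 1 - j0 : ℕ) : ℂ) := by rw [this]
          _ = (r : ℂ) + 1 - j0 := by push_cast [Nat.cast_sub (by omega : j0 ≤ r + 1)]; ring
        rw [e1]
        linear_combination -e2 / 2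
    have hfac : ∀ j ∈ Finset.range r,
        Tendsto (fun s : ℂ =>
          Complex.Gamma (((r : ℂ) + 1) / 2 - s - (k : ℂ) / 2 - (j : ℂ) / 2) /
            Complex.Gamma (((r : ℂ) + 1) / 2 - 2 * s - (j : ℂ) / 2))
          (nhdsWithin ((k:ℂ)/2) S)
          (nhds (if Even ((r:ℤ) + 1 - j - 2*k) then (2:ℂ) else 1)) := by
      intro j hj
      have hd : ((r:ℤ) + 1 - j - 2*k) ≤ 0 := by
        rw [Finset.mem_range] at hj
        omega
      refine ((key _ hd).comp hmap).congr fun s => ?_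
      have a1 : (((r:ℤ) + 1 - j - 2*k : ℤ) : ℂ)/2 - (s - (k:ℂ)/2) =
          ((r : ℂ) + 1) / 2 - s - (k : ℂ) / 2 - (j : ℂ) / 2 := by push_cast; ring
      have a2 : (((r:ℤ) + 1 - j - 2*k : ℤ) : ℂ)/2 - 2*(s - (k:ℂ)/2) =
          ((r : ℂ) + 1) / 2 - 2 * s - (j : ℂ) / 2 := by push_cast; ring
      show Complex.Gamma _ / Complex.Gamma _ = _
      rw [a1, a2]
    have hprod := tendsto_finset_prod (Finset.range r) hfac
    have hval : (∏ j ∈ Finset.range r, (if Even ((r:ℤ) + 1 - j - 2*k) then (2:ℂ) else 1)) =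
        if Even r then (2 : ℂ) ^ (r / 2) else (2 : ℂ) ^ ((r + 1) / 2) := by
      by_cases hre : Even r
      · rw [if_pos hre, ← lemE r]
        refine Finset.prod_congr rfl fun j _ => ?_
        have : Even ((r:ℤ) + 1 - j - 2*k) ↔ ¬ Even j := by
          rw [Int.even_iff, Nat.even_iff]
          rw [Nat.even_iff] at hre
          omega
        by_cases hje : Even j
        · rw [if_neg (by rw [this]; exact not_not_intro hje), if_pos hje]
        · rw [if_pos (this.mpr hje), if_neg hje]
      · rw [if_neg hre, ← lemF r]
        refine Finset.prod_congr rfl fun j _ => ?_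
        have : Even ((r:ℤ) + 1 - j - 2*k) ↔ Even j := by
          rw [Int.even_iff, Nat.even_iff]
          rw [Nat.even_iff] at hre
          omega
        by_cases hje : Even j
        · rw [if_pos (this.mpr hje), if_pos hje]
        · rw [if_neg (by rw [this]; exact hje), if_neg hje]
    rw [← hval]
    exact hprod
end

section
/- Let k be a positive integer and let t, r be integers with 1 ≤ t ≤ r ≤ 2k, and assume it is NOT the case that t = 1 and r is even. Then lim_{s → k/2} [ ∏_{j=0}^{r−1} Γ((r+1)/2 − s − k/2 − j/2) / Γ((r+1)/2 − 2s − j/2) ] · [ ∏_{i=0}^{t−1} Γ((t+1)/2 − s + k/2 − i/2) / Γ((r+1)/2 − s − k/2 − i/2) ] = 0, the limit being taken over s ∈ ℂ avoiding the poles of the numerators and zeros coming from poles of the denominators. -/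
open Filter

private lemma Gamma_shift (m : ℕ) (z : ℂ) (hz : ∀ l : ℕ, l ≤ m → z + l ≠ 0) :
    Complex.Gamma (z + ((m : ℂ) + 1)) =
      (∏ l ∈ Finset.range (m + 1), (z + l)) * Complex.Gamma z := by
  induction m with
  | zero => simpa using Complex.Gamma_add_one z (by simpa using hz 0 le_rfl)
  | succ n ih =>
    have hz' : z + ((n : ℂ) + 1) ≠ 0 := by
      have := hz (n + 1) le_rfl
      push_cast at this
      exact this
    have h0 : z + (((n + 1 : ℕ) : ℂ) + 1) = (z + ((n : ℂ) + 1)) + 1 := by push_cast; ring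
    rw [h0, Complex.Gamma_add_one _ hz', ih (fun l hl => hz l (hl.trans (Nat.le_succ n)))]
    conv_rhs => rw [Finset.prod_range_succ]
    push_cast
    ring

private lemma ratio_tendsto_two (m : ℕ) {l : Filter ℂ} {ε : ℂ → ℂ}
    (hε : Tendsto ε l (nhds 0)) (hne : ∀ᶠ s in l, ε s ≠ 0)
    (ha : ∀ᶠ s in l, GammaDefined (-(m : ℂ) + ε s))
    (hb : ∀ᶠ s in l, GammaDefined (-(m : ℂ) + 2 * ε s)) :
    Tendsto (fun s => Complex.Gamma (-(m : ℂ) + ε s) / Complex.Gamma (-(m : ℂ) + 2 * ε s))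
      l (nhds 2) := by
  set a : ℂ → ℂ := fun s => -(m : ℂ) + ε s with ha_def
  set b : ℂ → ℂ := fun s => -(m : ℂ) + 2 * ε s with hb_def
  -- eventual equality with the shifted expression
  have key : (fun s => Complex.Gamma (a s) / Complex.Gamma (b s)) =ᶠ[l] fun s =>
        (Complex.Gamma (a s + ((m : ℂ) + 1)) / Complex.Gamma (b s + ((m : ℂ) + 1))) *
          ∏ j ∈ Finset.range (m + 1), ((b s + j) / (a s + j)) := by
    filter_upwards [ha, hb] with s hsa hsb
    have hPa : ∀ j : ℕ, j ≤ m → a s + j ≠ 0 := by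
      intro j hj h
      exact hsa j (by linear_combination h)
    have hPb : ∀ j : ℕ, j ≤ m → b s + j ≠ 0 := by
      intro j hj h
      exact hsb j (by linear_combination h)
    have h1 := Gamma_shift m (a s) hPa
    have h2 := Gamma_shift m (b s) hPb
    rw [Finset.prod_div_distrib, h1, h2]
    have hpa : (∏ l ∈ Finset.range (m + 1), (a s + l)) ≠ 0 :=
      Finset.prod_ne_zero_iff.mpr fun j hj => hPa j (Nat.lt_succ_iff.mp (Finset.mem_range.mp hj))
    have hpb : (∏ l ∈ Finset.range (m + 1), (b s + l)) ≠ 0 :=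
      Finset.prod_ne_zero_iff.mpr fun j hj => hPb j (Nat.lt_succ_iff.mp (Finset.mem_range.mp hj))
    have hgb : Complex.Gamma (b s) ≠ 0 := Complex.Gamma_ne_zero hsb
    field_simp
  have hone : ∀ n : ℕ, (1 : ℂ) ≠ -(n : ℂ) := by
    intro n h
    have : (1 : ℂ) + n = 0 := by linear_combination h
    have : (1 + n : ℕ) = 0 := by exact_mod_cast this
    omega
  have hG1 : Tendsto (fun s => Complex.Gamma (a s + ((m : ℂ) + 1))) l (nhds 1) := by
    have hc : ContinuousAt Complex.Gamma 1 := (Complex.differentiableAt_Gamma 1 hone).continuousAt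
    have harg : Tendsto (fun s => a s + ((m : ℂ) + 1)) l (nhds 1) := by
      have : Tendsto (fun s => (1 : ℂ) + ε s) l (nhds 1) := by
        simpa using tendsto_const_nhds.add hε
      refine this.congr fun s => by simp [ha_def]; ring
    simpa [Complex.Gamma_one, Function.comp_def] using hc.tendsto.comp harg
  have hG2 : Tendsto (fun s => Complex.Gamma (b s + ((m : ℂ) + 1))) l (nhds 1) := by
    have hc : ContinuousAt Complex.Gamma 1 := (Complex.differentiableAt_Gamma 1 hone).continuousAt
    have harg : Tendsto (fun s => b s + ((m : ℂ) + 1)) l (nhds 1) := by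
      have : Tendsto (fun s => (1 : ℂ) + 2 * ε s) l (nhds 1) := by
        simpa using tendsto_const_nhds.add (hε.const_mul 2)
      refine this.congr fun s => by simp [hb_def]; ring
    simpa [Complex.Gamma_one, Function.comp_def] using hc.tendsto.comp harg
  have hprod : Tendsto (fun s => ∏ j ∈ Finset.range (m + 1), ((b s + j) / (a s + j))) l
      (nhds 2) := by
    rw [show (fun s => ∏ j ∈ Finset.range (m + 1), ((b s + j) / (a s + j))) =
        fun s => (∏ j ∈ Finset.range m, ((b s + j) / (a s + j))) * ((b s + m) / (a s + m)) from
      funext fun s => Finset.prod_range_succ _ m]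
    have hfirst : Tendsto (fun s => ∏ j ∈ Finset.range m, ((b s + j) / (a s + j))) l
        (nhds (∏ j ∈ Finset.range m, (1 : ℂ))) := by
      refine tendsto_finset_prod _ fun j hj => ?_
      have hjm : (j : ℕ) < m := Finset.mem_range.mp hj
      have hne' : -(m : ℂ) + j ≠ 0 := by
        intro h
        have : (j : ℂ) = m := by linear_combination h
        have : j = m := by exact_mod_cast this
        omega
      have hnum : Tendsto (fun s => b s + (j : ℂ)) l (nhds (-(m : ℂ) + j)) := by
        have : Tendsto (fun s => -(m : ℂ) + 2 * ε s + j) l (nhds (-(m : ℂ) + j)) := by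
          simpa using (tendsto_const_nhds.add (hε.const_mul 2)).add
            (tendsto_const_nhds : Tendsto (fun _ : ℂ => (j : ℂ)) l _)
        exact this
      have hden : Tendsto (fun s => a s + (j : ℂ)) l (nhds (-(m : ℂ) + j)) := by
        have : Tendsto (fun s => -(m : ℂ) + ε s + j) l (nhds (-(m : ℂ) + j)) := by
          simpa using (tendsto_const_nhds.add hε).add
            (tendsto_const_nhds : Tendsto (fun _ : ℂ => (j : ℂ)) l _)
        exact this
      simpa [div_self hne', Pi.div_def] using hnum.div hden hne'
    have hlast : Tendsto (fun s => (b s + (m : ℂ)) / (a s + (m : ℂ))) l (nhds 2) := by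
      have heq : (fun s => (b s + (m : ℂ)) / (a s + (m : ℂ))) =ᶠ[l] fun _ => 2 := by
        filter_upwards [hne] with s hs
        rw [show b s + (m : ℂ) = 2 * ε s from by show -(m : ℂ) + 2 * ε s + m = 2 * ε s; ring,
          show a s + (m : ℂ) = ε s from by show -(m : ℂ) + ε s + m = ε s; ring,
          mul_div_assoc, div_self hs, mul_one]
      exact Tendsto.congr' heq.symm tendsto_const_nhds
    simpa using hfirst.mul hlast
  have := (hG1.div hG2 one_ne_zero).mul hprod
  simp only [div_one] at this
  exact Tendsto.congr' key.symm (by simpa using this)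

private lemma ratio_tendsto_one {v : ℂ} (hv : ∀ n : ℕ, v ≠ -(n : ℂ)) {l : Filter ℂ}
    {ε : ℂ → ℂ} (hε : Tendsto ε l (nhds 0)) :
    Tendsto (fun s => Complex.Gamma (v + ε s) / Complex.Gamma (v + 2 * ε s)) l (nhds 1) := by
  have hc : ContinuousAt Complex.Gamma v := (Complex.differentiableAt_Gamma v hv).continuousAt
  have h1 : Tendsto (fun s => Complex.Gamma (v + ε s)) l (nhds (Complex.Gamma v)) := by
    have harg : Tendsto (fun s => v + ε s) l (nhds v) := by simpa using tendsto_const_nhds.add hε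
    simpa [Function.comp_def] using hc.tendsto.comp harg
  have h2 : Tendsto (fun s => Complex.Gamma (v + 2 * ε s)) l (nhds (Complex.Gamma v)) := by
    have harg : Tendsto (fun s => v + 2 * ε s) l (nhds v) := by
      simpa using tendsto_const_nhds.add (hε.const_mul 2)
    simpa [Function.comp_def] using hc.tendsto.comp harg
  have := h1.div h2 (Complex.Gamma_ne_zero hv)
  rwa [div_self (Complex.Gamma_ne_zero hv)] at this

private lemma gamma_tendsto {v : ℂ} (hv : ∀ n : ℕ, v ≠ -(n : ℂ)) {l : Filter ℂ}
    {ε : ℂ → ℂ} (hε : Tendsto ε l (nhds 0)) :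
    Tendsto (fun s => Complex.Gamma (v + ε s)) l (nhds (Complex.Gamma v)) := by
  have hc : ContinuousAt Complex.Gamma v := (Complex.differentiableAt_Gamma v hv).continuousAt
  have harg : Tendsto (fun s => v + ε s) l (nhds v) := by simpa using tendsto_const_nhds.add hε
  simpa [Function.comp_def] using hc.tendsto.comp harg

private lemma inv_gamma_tendsto (v : ℂ) {l : Filter ℂ} {ε : ℂ → ℂ}
    (hε : Tendsto ε l (nhds 0)) :
    Tendsto (fun s => (Complex.Gamma (v + ε s))⁻¹) l (nhds ((Complex.Gamma v)⁻¹)) := by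
  have hc : ContinuousAt (fun z : ℂ => (Complex.Gamma z)⁻¹) v :=
    (Complex.differentiable_one_div_Gamma v).continuousAt
  have harg : Tendsto (fun s => v + ε s) l (nhds v) := by simpa using tendsto_const_nhds.add hε
  simpa [Function.comp_def] using hc.tendsto.comp harg

/-- Let `k ≥ 1` and `1 ≤ t ≤ r ≤ 2k`, and assume it is not the case that `t = 1` with `r`
even. Then
`[∏_{j=0}^{r−1} Γ((r+1)/2 − s − k/2 − j/2) / Γ((r+1)/2 − 2s − j/2)]
  · [∏_{i=0}^{t−1} Γ((t+1)/2 − s + k/2 − i/2) / Γ((r+1)/2 − s − k/2 − i/2)]`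
tends to `0` as `s → k/2`, over those `s` avoiding the poles of the numerators and the
zeros coming from poles of the denominators. -/
theorem stmt_9 (k : ℕ) (hk : 0 < k) (t r : ℕ) (ht : 1 ≤ t) (htr : t ≤ r) (hr : r ≤ 2 * k)
    (hne : ¬(t = 1 ∧ Even r)) :
    Tendsto
      (fun s : ℂ =>
        (∏ j ∈ Finset.range r,
          Complex.Gamma (((r : ℂ) + 1) / 2 - s - (k : ℂ) / 2 - (j : ℂ) / 2) /
            Complex.Gamma (((r : ℂ) + 1) / 2 - 2 * s - (j : ℂ) / 2)) *
        (∏ i ∈ Finset.range t,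
          Complex.Gamma (((t : ℂ) + 1) / 2 - s + (k : ℂ) / 2 - (i : ℂ) / 2) /
            Complex.Gamma (((r : ℂ) + 1) / 2 - s - (k : ℂ) / 2 - (i : ℂ) / 2)))
      (nhdsWithin ((k : ℂ) / 2)
        {s : ℂ |
          (∀ j ∈ Finset.range r,
            GammaDefined (((r : ℂ) + 1) / 2 - s - (k : ℂ) / 2 - (j : ℂ) / 2) ∧
            GammaDefined (((r : ℂ) + 1) / 2 - 2 * s - (j : ℂ) / 2)) ∧
          (∀ i ∈ Finset.range t,
            GammaDefined (((t : ℂ) + 1) / 2 - s + (k : ℂ) / 2 - (i : ℂ) / 2))})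
      (nhds 0) := by
  set l := (nhdsWithin ((k : ℂ) / 2)
      {s : ℂ |
        (∀ j ∈ Finset.range r,
          GammaDefined (((r : ℂ) + 1) / 2 - s - (k : ℂ) / 2 - (j : ℂ) / 2) ∧
          GammaDefined (((r : ℂ) + 1) / 2 - 2 * s - (j : ℂ) / 2)) ∧
        (∀ i ∈ Finset.range t,
          GammaDefined (((t : ℂ) + 1) / 2 - s + (k : ℂ) / 2 - (i : ℂ) / 2))}) with hl
  have hmemS : ∀ᶠ s : ℂ in l,
      (∀ j ∈ Finset.range r,
        GammaDefined (((r : ℂ) + 1) / 2 - s - (k : ℂ) / 2 - (j : ℂ) / 2) ∧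
        GammaDefined (((r : ℂ) + 1) / 2 - 2 * s - (j : ℂ) / 2)) ∧
      (∀ i ∈ Finset.range t,
        GammaDefined (((t : ℂ) + 1) / 2 - s + (k : ℂ) / 2 - (i : ℂ) / 2)) := by
    rw [hl]
    exact eventually_mem_nhdsWithin
  have hnotmem : ¬ ((∀ j ∈ Finset.range r,
        GammaDefined (((r : ℂ) + 1) / 2 - ((k : ℂ) / 2) - (k : ℂ) / 2 - (j : ℂ) / 2) ∧
        GammaDefined (((r : ℂ) + 1) / 2 - 2 * ((k : ℂ) / 2) - (j : ℂ) / 2)) ∧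
      (∀ i ∈ Finset.range t,
        GammaDefined (((t : ℂ) + 1) / 2 - ((k : ℂ) / 2) + (k : ℂ) / 2 - (i : ℂ) / 2))) := by
    intro h
    refine (h.1 (r - 1) (Finset.mem_range.mpr (by omega))).2 (k - 1) ?_
    rw [Nat.cast_sub (by omega : 1 ≤ k), Nat.cast_sub (by omega : 1 ≤ r)]
    push_cast
    ring
  have hsne : ∀ᶠ s : ℂ in l, s ≠ (k : ℂ) / 2 := by
    filter_upwards [hmemS] with s hs h
    exact hnotmem (h ▸ hs)
  have hεlim : Tendsto (fun s : ℂ => (k : ℂ) / 2 - s) l (nhds 0) := by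
    have h0 : Tendsto (fun s : ℂ => (k : ℂ) / 2 - s) (nhds ((k : ℂ) / 2))
        (nhds ((k : ℂ) / 2 - (k : ℂ) / 2)) := (continuous_const.sub continuous_id).tendsto _
    rw [hl]
    simpa using h0.mono_left nhdsWithin_le_nhds
  have hεne : ∀ᶠ s : ℂ in l, (k : ℂ) / 2 - s ≠ 0 := by
    filter_upwards [hsne] with s hs
    exact sub_ne_zero.mpr (Ne.symm hs)
  -- Part A : the first product tends to a finite limit
  have hA : ∀ j ∈ Finset.range r,
      Tendsto (fun s : ℂ =>
          Complex.Gamma (((r : ℂ) + 1) / 2 - s - (k : ℂ) / 2 - (j : ℂ) / 2) /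
            Complex.Gamma (((r : ℂ) + 1) / 2 - 2 * s - (j : ℂ) / 2)) l
        (nhds (if (r - j) % 2 = 1 then (2 : ℂ) else 1)) := by
    intro j hj
    have hjr : j < r := Finset.mem_range.mp hj
    by_cases hpar : (r - j) % 2 = 1
    · rw [if_pos hpar]
      obtain ⟨m, hm⟩ : ∃ m, r + 1 + 2 * m = 2 * k + j :=
        ⟨(2 * k + j - r - 1) / 2, by omega⟩
      have hmC : ((r : ℂ) + 1) + 2 * (m : ℂ) = 2 * (k : ℂ) + (j : ℂ) := by exact_mod_cast hm
      have harg1 : ∀ s : ℂ, ((r : ℂ) + 1) / 2 - s - (k : ℂ) / 2 - (j : ℂ) / 2 =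
          -(m : ℂ) + ((k : ℂ) / 2 - s) := fun s => by linear_combination hmC / 2
      have harg2 : ∀ s : ℂ, ((r : ℂ) + 1) / 2 - 2 * s - (j : ℂ) / 2 =
          -(m : ℂ) + 2 * ((k : ℂ) / 2 - s) := fun s => by linear_combination hmC / 2
      have ha : ∀ᶠ s : ℂ in l, GammaDefined (-(m : ℂ) + ((k : ℂ) / 2 - s)) := by
        filter_upwards [hmemS] with s hs
        have := (hs.1 j hj).1
        rwa [harg1 s] at this
      have hb : ∀ᶠ s : ℂ in l, GammaDefined (-(m : ℂ) + 2 * ((k : ℂ) / 2 - s)) := by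
        filter_upwards [hmemS] with s hs
        have := (hs.1 j hj).2
        rwa [harg2 s] at this
      have h2 := ratio_tendsto_two m hεlim hεne ha hb
      refine h2.congr fun s => ?_
      rw [harg1 s, harg2 s]
    · rw [if_neg hpar]
      have hpar0 : (r - j) % 2 = 0 := by omega
      have hv : ∀ n : ℕ, ((r : ℂ) + 1 - (j : ℂ)) / 2 - (k : ℂ) ≠ -(n : ℂ) := by
        intro n h
        have h2 : (r : ℂ) + 1 + 2 * (n : ℂ) = 2 * (k : ℂ) + (j : ℂ) := by
          linear_combination 2 * h
        have : r + 1 + 2 * n = 2 * k + j := by exact_mod_cast h2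
        omega
      have h1 := ratio_tendsto_one hv hεlim
      refine h1.congr fun s => ?_
      rw [show ((r : ℂ) + 1 - (j : ℂ)) / 2 - (k : ℂ) + ((k : ℂ) / 2 - s) =
          ((r : ℂ) + 1) / 2 - s - (k : ℂ) / 2 - (j : ℂ) / 2 from by ring,
        show ((r : ℂ) + 1 - (j : ℂ)) / 2 - (k : ℂ) + 2 * ((k : ℂ) / 2 - s) =
          ((r : ℂ) + 1) / 2 - 2 * s - (j : ℂ) / 2 from by ring]
  -- Part B : the second product tends to zero
  have hB : ∀ i ∈ Finset.range t,
      Tendsto (fun s : ℂ =>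
          Complex.Gamma (((t : ℂ) + 1) / 2 - s + (k : ℂ) / 2 - (i : ℂ) / 2) /
            Complex.Gamma (((r : ℂ) + 1) / 2 - s - (k : ℂ) / 2 - (i : ℂ) / 2)) l
        (nhds (Complex.Gamma (((t : ℂ) + 1 - (i : ℂ)) / 2) *
          (Complex.Gamma (((r : ℂ) + 1 - (i : ℂ)) / 2 - (k : ℂ)))⁻¹)) := by
    intro i hi
    have hit : i < t := Finset.mem_range.mp hi
    have hw : ∀ n : ℕ, ((t : ℂ) + 1 - (i : ℂ)) / 2 ≠ -(n : ℂ) := by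
      intro n h
      have h2 : (t : ℂ) + 1 + 2 * (n : ℂ) = (i : ℂ) := by linear_combination 2 * h
      have : t + 1 + 2 * n = i := by exact_mod_cast h2
      omega
    have h1 := gamma_tendsto hw hεlim
    have h2 := inv_gamma_tendsto (((r : ℂ) + 1 - (i : ℂ)) / 2 - (k : ℂ)) hεlim
    refine (h1.mul h2).congr fun s => ?_
    rw [show ((t : ℂ) + 1 - (i : ℂ)) / 2 + ((k : ℂ) / 2 - s) =
        ((t : ℂ) + 1) / 2 - s + (k : ℂ) / 2 - (i : ℂ) / 2 from by ring,
      show ((r : ℂ) + 1 - (i : ℂ)) / 2 - (k : ℂ) + ((k : ℂ) / 2 - s) =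
        ((r : ℂ) + 1) / 2 - s - (k : ℂ) / 2 - (i : ℂ) / 2 from by ring]
    exact (div_eq_mul_inv _ _).symm
  have hAT := tendsto_finset_prod (Finset.range r) hA
  have hBT := tendsto_finset_prod (Finset.range t) hB
  have hBzero : (∏ i ∈ Finset.range t,
      (Complex.Gamma (((t : ℂ) + 1 - (i : ℂ)) / 2) *
        (Complex.Gamma (((r : ℂ) + 1 - (i : ℂ)) / 2 - (k : ℂ)))⁻¹)) = 0 := by
    have hro : t = 1 → r % 2 = 1 := by
      intro h1
      rcases Nat.even_or_odd r with he | ho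
      · exact absurd ⟨h1, he⟩ hne
      · exact Nat.odd_iff.mp ho
    obtain ⟨i₀, hit, hodd⟩ : ∃ i, i < t ∧ (r - i) % 2 = 1 := by
      by_cases ht1 : t = 1
      · exact ⟨0, by omega, by simpa using hro ht1⟩
      · rcases Nat.even_or_odd r with he | ho
        · have := Nat.even_iff.mp he
          exact ⟨1, by omega, by omega⟩
        · have := Nat.odd_iff.mp ho
          exact ⟨0, by omega, by omega⟩
    refine Finset.prod_eq_zero (Finset.mem_range.mpr hit) ?_
    obtain ⟨m, hm⟩ : ∃ m, r + 1 + 2 * m = 2 * k + i₀ :=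
      ⟨(2 * k + i₀ - r - 1) / 2, by omega⟩
    have hmC : ((r : ℂ) + 1) + 2 * (m : ℂ) = 2 * (k : ℂ) + (i₀ : ℂ) := by exact_mod_cast hm
    rw [show ((r : ℂ) + 1 - (i₀ : ℂ)) / 2 - (k : ℂ) = -(m : ℂ) from by linear_combination hmC / 2,
      Complex.Gamma_neg_nat_eq_zero, inv_zero, mul_zero]
  have hfinal := hAT.mul hBT
  rw [hBzero, mul_zero] at hfinal
  exact hfinal
end
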